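/- arXiv:math/0401267 — 9 statements merged into one kernel-verified Lean document; each statement's English description precedes it below -/
import Mathlib

section
/- Let U ⊆ ℂ be open and let ξ, μ : ℂ → ℂ be holomorphic on U such that w(z) := conj(ξ(z)) − μ(z) ≠ 0 for every z ∈ U. Then the function z ↦ log |w(z)| is smooth on U and its Laplacian satisfies Δ(log |w|)(z) = Re( 4 · μ′(z) · conj(ξ′(z)) / w(z)² ) for every z ∈ U. -/
/-- Partial derivative in the direction of `1` (the `x`-direction) of `u : ℂ → ℝ`. -/
noncomputable def pdx (u : ℂ → ℝ) (z : ℂ) : ℝ := fderiv ℝ u z 1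

/-- Partial derivative in the direction of `I` (the `y`-direction) of `u : ℂ → ℝ`. -/
noncomputable def pdy (u : ℂ → ℝ) (z : ℂ) : ℝ := fderiv ℝ u z Complex.I

/-- The flat Laplacian `Δu = ∂²u/∂x² + ∂²u/∂y²` of `u : ℂ → ℝ`. -/
noncomputable def lap (u : ℂ → ℝ) (z : ℂ) : ℝ := pdx (pdx u) z + pdy (pdy u) z

/-!
Write `w_x, w_y` for the partial derivatives of `w`. Since `log |w|` is locally the real part
of a branch of `log w`, its partials are `Re (w_x / w)` and `Re (w_y / w)`, so
`Δ log |w| = Re (((w_xx + w_yy) w - (w_x² + w_y²)) / w²)`. For `w = conj ξ - μ` the function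
`w` is harmonic, `w_xx + w_yy = 0`, while `w_x = conj ξ' - μ'` and `w_y = -i (conj ξ' + μ')`
give `w_x² + w_y² = -4 μ' conj ξ'`.
-/

open ComplexConjugate Filter Topology

section LogNorm

variable {E : Type*} [NormedAddCommGroup E] [NormedSpace ℝ E]

theorem HasFDerivAt.log_norm {w : E → ℂ} {L : E →L[ℝ] ℂ} {z : E} (hw : HasFDerivAt w L z)
    (h0 : w z ≠ 0) :
    HasFDerivAt (fun x => Real.log ‖w x‖) (Complex.reCLM.comp ((w z)⁻¹ • L)) z := by
  have hlog : (fun x => Real.log ‖w x‖) = fun x => 2⁻¹ * Real.log (‖w x‖ ^ 2) := by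
    funext x
    rw [Real.log_pow]
    ring
  rw [hlog]
  refine ((hw.norm_sq.log (by positivity)).const_mul 2⁻¹).congr_fderiv ?_
  ext v
  simp only [smul_apply, ContinuousLinearMap.comp_apply, coe_innerSL_apply, Complex.inner,
    Complex.mul_re, Complex.conj_re, Complex.conj_im, nsmul_eq_mul, smul_eq_mul,
    Complex.reCLM_apply, Complex.inv_re, Complex.inv_im, Complex.normSq_eq_norm_sq]
  ring

theorem HasFDerivAt.fun_div {𝕜 : Type*} [NontriviallyNormedField 𝕜] [NormedAlgebra ℝ 𝕜]
    {c d : E → 𝕜} {C D : E →L[ℝ] 𝕜} {z : E}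
    (hc : HasFDerivAt c C z) (hd : HasFDerivAt d D z) (h0 : d z ≠ 0) :
    HasFDerivAt (fun x => c x / d x) ((d z ^ 2)⁻¹ • (d z • C - c z • D)) z := by
  simp_rw [div_eq_mul_inv]
  refine (hc.mul ((hasFDerivAt_inv' (𝕜 := ℝ) h0).comp z hd)).congr_fderiv ?_
  ext v
  simp only [ContinuousLinearMap.neg_comp, Function.comp_apply, add_apply, neg_apply, smul_apply,
    ContinuousLinearMap.comp_apply, ContinuousLinearMap.mulLeftRight_apply, smul_eq_mul, sub_apply]
  field_simp
  ring

theorem fderiv_fderiv_log_norm_apply {w : E → ℂ} {z : E} (hw : ContDiffAt ℝ 2 w z)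
    (h0 : w z ≠ 0) (v : E) :
    fderiv ℝ (fun x => fderiv ℝ (fun y => Real.log ‖w y‖) x v) z v =
      ((fderiv ℝ (fun x => fderiv ℝ w x v) z v * w z - fderiv ℝ w z v ^ 2) / w z ^ 2).re := by
  have hnear : ∀ᶠ x in 𝓝 z, DifferentiableAt ℝ w x ∧ w x ≠ 0 :=
    ((hw.eventually (by simp)).mono fun x hx => hx.differentiableAt (by simp)).and
      (hw.continuousAt.eventually_ne h0)
  have hfirst : (fun x => fderiv ℝ (fun y => Real.log ‖w y‖) x v) =ᶠ[𝓝 z]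
      fun x => (fderiv ℝ w x v / w x).re :=
    hnear.mono fun x ⟨hd, hx⟩ => by
      dsimp only
      rw [(hd.hasFDerivAt.log_norm hx).fderiv]
      simp [div_eq_inv_mul]
  have hDv : DifferentiableAt ℝ (fun x => fderiv ℝ w x v) z :=
    ((hw.fderiv_right (m := 1) le_rfl).differentiableAt one_ne_zero).clm_apply
      (differentiableAt_const v)
  have hquot := hDv.hasFDerivAt.fun_div (hw.differentiableAt (by simp)).hasFDerivAt h0
  have hre : HasFDerivAt (fun x => (fderiv ℝ w x v / w x).re) _ z :=
    Complex.reCLM.hasFDerivAt.comp z hquot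
  rw [hfirst.fderiv_eq, hre.fderiv, ContinuousLinearMap.comp_apply, Complex.reCLM_apply]
  congr 1
  simp only [smul_apply, sub_apply, smul_eq_mul]
  ring

end LogNorm

theorem lap_log_norm {w : ℂ → ℂ} {z : ℂ} (hw : ContDiffAt ℝ 2 w z) (h0 : w z ≠ 0) :
    lap (fun x => Real.log ‖w x‖) z =
      (((fderiv ℝ (fun x => fderiv ℝ w x 1) z 1
          + fderiv ℝ (fun x => fderiv ℝ w x Complex.I) z Complex.I) * w z
        - (fderiv ℝ w z 1 ^ 2 + fderiv ℝ w z Complex.I ^ 2)) / w z ^ 2).re := by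
  unfold lap pdx pdy
  rw [fderiv_fderiv_log_norm_apply hw h0, fderiv_fderiv_log_norm_apply hw h0, ← Complex.add_re]
  congr 1
  ring

section ConjSub

variable {ξ μ : ℂ → ℂ}

theorem fderiv_conj_sub_apply {x : ℂ} (hξ : DifferentiableAt ℂ ξ x)
    (hμ : DifferentiableAt ℂ μ x) (v : ℂ) :
    fderiv ℝ (fun y => conj (ξ y) - μ y) x v = conj (v * deriv ξ x) - v * deriv μ x := by
  have hw : HasFDerivAt (fun y => conj (ξ y) - μ y) _ x :=
    (hξ.hasFDerivAt.restrictScalars ℝ).star.sub (hμ.hasFDerivAt.restrictScalars ℝ)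
  rw [hw.fderiv]
  simp

theorem fderiv_fderiv_conj_sub_apply {z : ℂ} (hξ : AnalyticAt ℂ ξ z) (hμ : AnalyticAt ℂ μ z)
    (v : ℂ) :
    fderiv ℝ (fun x => fderiv ℝ (fun y => conj (ξ y) - μ y) x v) z v =
      conj (v ^ 2 * deriv (deriv ξ) z) - v ^ 2 * deriv (deriv μ) z := by
  have hfirst : (fun x => fderiv ℝ (fun y => conj (ξ y) - μ y) x v) =ᶠ[𝓝 z]
      fun x => conj (v * deriv ξ x) - v * deriv μ x :=
    (hξ.eventually_analyticAt.and hμ.eventually_analyticAt).mono fun x h =>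
      fderiv_conj_sub_apply h.1.differentiableAt h.2.differentiableAt v
  have hξ' := hξ.deriv.differentiableAt
  have hμ' := hμ.deriv.differentiableAt
  rw [hfirst.fderiv_eq, fderiv_conj_sub_apply (hξ'.const_mul v) (hμ'.const_mul v),
    deriv_const_mul _ hξ', deriv_const_mul _ hμ']
  simp only [sq, mul_assoc]

theorem contDiffAt_conj_sub {z : ℂ} {n : WithTop ℕ∞} (hξ : AnalyticAt ℂ ξ z)
    (hμ : AnalyticAt ℂ μ z) : ContDiffAt ℝ n (fun x => conj (ξ x) - μ x) z :=
  (Complex.conjCLE.contDiff.contDiffAt.comp z (hξ.contDiffAt.restrict_scalars ℝ)).sub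
    (hμ.contDiffAt.restrict_scalars ℝ)

end ConjSub

/-- If `ξ, μ` are holomorphic on an open set `U ⊆ ℂ` and `w = conj ∘ ξ − μ` never vanishes
on `U`, then `log |w|` is smooth on `U` and its Laplacian equals
`Re (4 μ' conj(ξ') / w²)` on `U`. -/
theorem log_abs_w_smooth_and_laplacian
    (U : Set ℂ) (hU : IsOpen U) (ξ μ : ℂ → ℂ)
    (hξ : DifferentiableOn ℂ ξ U) (hμ : DifferentiableOn ℂ μ U)
    (w : ℂ → ℂ) (hw : ∀ z, w z = (starRingEnd ℂ) (ξ z) - μ z)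
    (hw0 : ∀ z ∈ U, w z ≠ 0) :
    ContDiffOn ℝ (⊤ : ℕ∞) (fun z => Real.log ‖w z‖) U ∧
    ∀ z ∈ U,
      lap (fun z => Real.log ‖w z‖) z =
        (4 * deriv μ z * (starRingEnd ℂ) (deriv ξ z) / (w z) ^ 2).re := by
  obtain rfl : w = fun z => conj (ξ z) - μ z := funext hw
  have hanalytic : ∀ z ∈ U, AnalyticAt ℂ ξ z ∧ AnalyticAt ℂ μ z := fun z hz =>
    ⟨hξ.analyticAt (hU.mem_nhds hz), hμ.analyticAt (hU.mem_nhds hz)⟩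
  refine ⟨fun z hz => ?_, fun z hz => ?_⟩
  · obtain ⟨hξz, hμz⟩ := hanalytic z hz
    have h0 := hw0 z hz
    exact (((contDiffAt_conj_sub hξz hμz).norm ℝ h0).log
      (norm_ne_zero_iff.2 h0)).contDiffWithinAt
  · obtain ⟨hξz, hμz⟩ := hanalytic z hz
    rw [lap_log_norm (contDiffAt_conj_sub hξz hμz) (hw0 z hz),
      fderiv_fderiv_conj_sub_apply hξz hμz, fderiv_fderiv_conj_sub_apply hξz hμz,
      fderiv_conj_sub_apply hξz.differentiableAt hμz.differentiableAt,
      fderiv_conj_sub_apply hξz.differentiableAt hμz.differentiableAt]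
    congr 1
    simp only [Complex.I_sq, one_pow, one_mul, neg_mul, map_neg, map_mul, Complex.conj_I]
    linear_combination
      -((conj (deriv ξ z) + deriv μ z) ^ 2 / (conj (ξ z) - μ z) ^ 2) * Complex.I_sq
end

section
/- Let U ⊆ ℂ be open and let X = (X₁, X₂, X₃) : ℂ → ℝ³ be a conformal harmonic immersion on U such that X₁(z)² + X₂(z)² > 0 for every z ∈ U. Set r(z) = √(X₁(z)² + X₂(z)²). Then for every z ∈ U one has |Δ(log r)(z)| ≤ ‖∇X₃(z)‖² / r(z)². (This is the paper's Lemma 2.2, the intrinsic inequality |Δ_M log r| ≤ |∇_M x₃|² / r² on a minimal surface avoiding the x₃-axis, expressed in a conformal parametrization.) -/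
/-- The squared norm of the flat gradient of `u : ℂ → ℝ`. -/
noncomputable def gradSq (u : ℂ → ℝ) (z : ℂ) : ℝ := (pdx u z) ^ 2 + (pdy u z) ^ 2

open Topology

section SecondDirectionalDerivative

variable {E : Type*} [NormedAddCommGroup E] [NormedSpace ℝ E] {f g : E → ℝ} {z v : E}

noncomputable def dirDeriv2 (f : E → ℝ) (v z : E) : ℝ :=
  fderiv ℝ (fun u => fderiv ℝ f u v) z v

lemma ContDiffAt.eventually_differentiableAt (hf : ContDiffAt ℝ 2 f z) :
    ∀ᶠ u in 𝓝 z, DifferentiableAt ℝ f u :=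
  (hf.eventually (by simp)).mono fun _ hu => hu.differentiableAt (by norm_num)

lemma ContDiffAt.differentiableAt_fderiv_apply (hf : ContDiffAt ℝ 2 f z) (v : E) :
    DifferentiableAt ℝ (fun u => fderiv ℝ f u v) z :=
  ((hf.fderiv_right (m := 1) le_rfl).clm_apply contDiffAt_const).differentiableAt one_ne_zero

lemma fderiv_fun_add_apply (hf : DifferentiableAt ℝ f z) (hg : DifferentiableAt ℝ g z) :
    fderiv ℝ (fun u => f u + g u) z v = fderiv ℝ f z v + fderiv ℝ g z v := by
  simp [fderiv_fun_add hf hg]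

lemma fderiv_fun_mul_apply (hf : DifferentiableAt ℝ f z) (hg : DifferentiableAt ℝ g z) :
    fderiv ℝ (fun u => f u * g u) z v = f z * fderiv ℝ g z v + g z * fderiv ℝ f z v := by
  simp [fderiv_fun_mul hf hg]

lemma dirDeriv2_add (hf : ContDiffAt ℝ 2 f z) (hg : ContDiffAt ℝ 2 g z) :
    dirDeriv2 (fun u => f u + g u) v z = dirDeriv2 f v z + dirDeriv2 g v z := by
  have h : (fun u => fderiv ℝ (fun u => f u + g u) u v)
      =ᶠ[𝓝 z] fun u => fderiv ℝ f u v + fderiv ℝ g u v := by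
    filter_upwards [hf.eventually_differentiableAt, hg.eventually_differentiableAt]
      with u hfu hgu using fderiv_fun_add_apply hfu hgu
  rw [dirDeriv2, h.fderiv_eq, fderiv_fun_add_apply (hf.differentiableAt_fderiv_apply v)
    (hg.differentiableAt_fderiv_apply v)]
  rfl

lemma dirDeriv2_mul (hf : ContDiffAt ℝ 2 f z) (hg : ContDiffAt ℝ 2 g z) :
    dirDeriv2 (fun u => f u * g u) v z
      = f z * dirDeriv2 g v z + 2 * (fderiv ℝ f z v * fderiv ℝ g z v) + g z * dirDeriv2 f v z := by
  have h : (fun u => fderiv ℝ (fun u => f u * g u) u v)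
      =ᶠ[𝓝 z] fun u => f u * fderiv ℝ g u v + g u * fderiv ℝ f u v := by
    filter_upwards [hf.eventually_differentiableAt, hg.eventually_differentiableAt]
      with u hfu hgu using fderiv_fun_mul_apply hfu hgu
  have hf₁ := hf.differentiableAt (by norm_num)
  have hg₁ := hg.differentiableAt (by norm_num)
  have hf' := hf.differentiableAt_fderiv_apply v
  have hg' := hg.differentiableAt_fderiv_apply v
  rw [dirDeriv2, h.fderiv_eq, fderiv_fun_add_apply (hf₁.fun_mul hg') (hg₁.fun_mul hf'),
    fderiv_fun_mul_apply hf₁ hg', fderiv_fun_mul_apply hg₁ hf']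
  unfold dirDeriv2
  ring

lemma dirDeriv2_log (hf : ContDiffAt ℝ 2 f z) (hf₀ : f z ≠ 0) :
    dirDeriv2 (fun u => Real.log (f u)) v z
      = dirDeriv2 f v z / f z - (fderiv ℝ f z v / f z) ^ 2 := by
  have hlog : ContDiffAt ℝ 2 (fun u => Real.log (f u)) z := hf.log hf₀
  have h : (fun u => f u * fderiv ℝ (fun u => Real.log (f u)) u v)
      =ᶠ[𝓝 z] fun u => fderiv ℝ f u v := by
    filter_upwards [hf.eventually_differentiableAt, hf.continuousAt.eventually_ne hf₀]
      with u hfu hu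
    rw [fderiv.log hfu hu]
    simp [hu]
  have key := DFunLike.congr_fun (h.fderiv_eq (𝕜 := ℝ)) v
  rw [fderiv_fun_mul_apply (hf.differentiableAt (by norm_num))
    (hlog.differentiableAt_fderiv_apply v), fderiv.log (hf.differentiableAt (by norm_num)) hf₀]
    at key
  simp only [FunLike.coe_smul, Pi.smul_apply, smul_eq_mul] at key
  unfold dirDeriv2
  field_simp at key ⊢
  linear_combination key

lemma dirDeriv2_const_smul (c : ℝ) : dirDeriv2 (c • f) v z = c * dirDeriv2 f v z := by
  have h : (fun u => fderiv ℝ (c • f) u v) = c • fun u => fderiv ℝ f u v := by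
    ext u; simp [fderiv_const_smul_field]
  rw [dirDeriv2, h, fderiv_const_smul_field]
  rfl

end SecondDirectionalDerivative

lemma abs_sub_le_of_sq_add_sq_add_sq_eq_zero {α β γ : ℂ} (h : α ^ 2 + β ^ 2 + γ ^ 2 = 0)
    (x₁ x₂ : ℝ) :
    |(x₁ ^ 2 + x₂ ^ 2) * (‖α‖ ^ 2 + ‖β‖ ^ 2) - 2 * ‖x₁ * α + x₂ * β‖ ^ 2|
      ≤ (x₁ ^ 2 + x₂ ^ 2) * ‖γ‖ ^ 2 := by
  set ξ : ℂ := ⟨x₁, x₂⟩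
  have hξ : ‖ξ‖ ^ 2 = x₁ ^ 2 + x₂ ^ 2 := by rw [Complex.sq_norm, Complex.normSq_mk]; ring
  have key : (x₁ ^ 2 + x₂ ^ 2) * (‖α‖ ^ 2 + ‖β‖ ^ 2) - 2 * ‖x₁ * α + x₂ * β‖ ^ 2
      = -(ξ ^ 2 * (α - Complex.I * β) * (starRingEnd ℂ) (α + Complex.I * β)).re := by
    simp only [Complex.sq_norm, Complex.normSq_apply]
    simp only [sq, Complex.add_re, Complex.mul_re, Complex.ofReal_re, Complex.ofReal_im, zero_mul,
      sub_zero, Complex.add_im, Complex.mul_im, add_zero, map_add, map_mul, Complex.conj_I, neg_mul,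
      Complex.sub_re, Complex.I_re, Complex.I_im, one_mul, zero_sub, sub_neg_eq_add, Complex.sub_im,
      zero_add, Complex.conj_re, Complex.neg_re, Complex.conj_im, mul_neg, Complex.neg_im, neg_zero,
      neg_sub, ξ]
    ring
  have hfactor : (α - Complex.I * β) * (α + Complex.I * β) = -γ ^ 2 := by
    linear_combination (-1 : ℂ) * β ^ 2 * Complex.I_sq + h
  calc |(x₁ ^ 2 + x₂ ^ 2) * (‖α‖ ^ 2 + ‖β‖ ^ 2) - 2 * ‖x₁ * α + x₂ * β‖ ^ 2|
      ≤ ‖ξ ^ 2 * (α - Complex.I * β) * (starRingEnd ℂ) (α + Complex.I * β)‖ := by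
        rw [key, abs_neg]; exact Complex.abs_re_le_norm _
    _ = ‖ξ‖ ^ 2 * ‖(α - Complex.I * β) * (α + Complex.I * β)‖ := by
        simp only [norm_mul, norm_pow, Complex.norm_conj]; ring
    _ = (x₁ ^ 2 + x₂ ^ 2) * ‖γ‖ ^ 2 := by rw [hξ, hfactor, norm_neg, norm_pow]

-- `cgrad u = 2 ∂u/∂z̄`, the conjugate of the Weierstrass datum `2 ∂u/∂z`.
noncomputable def cgrad (u : ℂ → ℝ) (z : ℂ) : ℂ := ⟨pdx u z, pdy u z⟩

lemma sq_norm_cgrad (u : ℂ → ℝ) (z : ℂ) : ‖cgrad u z‖ ^ 2 = gradSq u z := by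
  rw [Complex.sq_norm, cgrad, Complex.normSq_mk, gradSq]
  ring

lemma cgrad_sq_add_sq_add_sq_eq_zero {X₁ X₂ X₃ : ℂ → ℝ} {z : ℂ}
    (horth : pdx X₁ z * pdy X₁ z + pdx X₂ z * pdy X₂ z + pdx X₃ z * pdy X₃ z = 0)
    (hnorm : pdx X₁ z ^ 2 + pdx X₂ z ^ 2 + pdx X₃ z ^ 2
      = pdy X₁ z ^ 2 + pdy X₂ z ^ 2 + pdy X₃ z ^ 2) :
    cgrad X₁ z ^ 2 + cgrad X₂ z ^ 2 + cgrad X₃ z ^ 2 = 0 := by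
  apply Complex.ext
  · simp only [cgrad, sq, Complex.add_re, Complex.mul_re, Complex.zero_re]
    linear_combination hnorm
  · simp only [cgrad, sq, Complex.add_im, Complex.mul_im, Complex.zero_im]
    linear_combination 2 * horth

lemma lap_eq_dirDeriv2_add (u : ℂ → ℝ) (z : ℂ) :
    lap u z = dirDeriv2 u 1 z + dirDeriv2 u Complex.I z :=
  rfl

lemma lap_log_sqrt_sq_add_sq {f g : ℂ → ℝ} {z : ℂ} (hf : ContDiffAt ℝ 2 f z)
    (hg : ContDiffAt ℝ 2 g z) (hf₀ : lap f z = 0) (hg₀ : lap g z = 0)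
    (hz : f z ^ 2 + g z ^ 2 ≠ 0) :
    lap (fun w => Real.log √(f w ^ 2 + g w ^ 2)) z * (f z ^ 2 + g z ^ 2) ^ 2
      = (f z ^ 2 + g z ^ 2) * (‖cgrad f z‖ ^ 2 + ‖cgrad g z‖ ^ 2)
        - 2 * ‖f z * cgrad f z + g z * cgrad g z‖ ^ 2 := by
  set Q : ℂ → ℝ := fun w => f w * f w + g w * g w
  have hlog : (fun w => Real.log √(f w ^ 2 + g w ^ 2))
      = (1 / 2 : ℝ) • fun w => Real.log (Q w) := by
    funext w
    rw [Real.log_sqrt (by positivity)]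
    simp only [Pi.smul_apply, smul_eq_mul, Q, sq]
    ring
  have hQ : ContDiffAt ℝ 2 Q z := (hf.mul hf).add (hg.mul hg)
  have hQ₀ : Q z ≠ 0 := by simpa [Q, sq] using hz
  have hf₁ := hf.differentiableAt (by norm_num)
  have hg₁ := hg.differentiableAt (by norm_num)
  have hdir : ∀ v, dirDeriv2 (fun w => Real.log (Q w)) v z * Q z ^ 2
      = 2 * Q z * (f z * dirDeriv2 f v z + g z * dirDeriv2 g v z
          + fderiv ℝ f z v ^ 2 + fderiv ℝ g z v ^ 2)
        - 4 * (f z * fderiv ℝ f z v + g z * fderiv ℝ g z v) ^ 2 := by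
    intro v
    rw [dirDeriv2_log hQ hQ₀, dirDeriv2_add (hf.mul hf) (hg.mul hg), dirDeriv2_mul hf hf,
      dirDeriv2_mul hg hg, fderiv_fun_add_apply (hf₁.fun_mul hf₁) (hg₁.fun_mul hg₁),
      fderiv_fun_mul_apply hf₁ hf₁, fderiv_fun_mul_apply hg₁ hg₁]
    field_simp
    ring
  rw [lap_eq_dirDeriv2_add] at hf₀ hg₀ ⊢
  rw [hlog, dirDeriv2_const_smul, dirDeriv2_const_smul]
  simp only [one_div, cgrad, pdx, pdy, Complex.sq_norm, Complex.normSq_apply, Complex.add_re,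
    Complex.mul_re, Complex.ofReal_re, Complex.ofReal_im, zero_mul, sub_zero, Complex.add_im,
    Complex.mul_im, add_zero]
  linear_combination (1 / 2 : ℝ) * hdir 1 + (1 / 2 : ℝ) * hdir Complex.I
    + f z * (f z ^ 2 + g z ^ 2) * hf₀ + g z * (f z ^ 2 + g z ^ 2) * hg₀

theorem abs_laplacian_log_r_le_general
    (U : Set ℂ) (hU : IsOpen U) (X₁ X₂ X₃ : ℂ → ℝ)
    (hsm₁ : ContDiffOn ℝ (⊤ : ℕ∞) X₁ U) (hsm₂ : ContDiffOn ℝ (⊤ : ℕ∞) X₂ U)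
    (hharm : ∀ z ∈ U, lap X₁ z = 0 ∧ lap X₂ z = 0 ∧ lap X₃ z = 0)
    (lam : ℂ → ℝ)
    (hconf : ∀ z ∈ U,
      pdx X₁ z * pdy X₁ z + pdx X₂ z * pdy X₂ z + pdx X₃ z * pdy X₃ z = 0)
    (hnormx : ∀ z ∈ U, (pdx X₁ z) ^ 2 + (pdx X₂ z) ^ 2 + (pdx X₃ z) ^ 2 = (lam z) ^ 2)
    (hnormy : ∀ z ∈ U, (pdy X₁ z) ^ 2 + (pdy X₂ z) ^ 2 + (pdy X₃ z) ^ 2 = (lam z) ^ 2)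
    (hax : ∀ z ∈ U, 0 < (X₁ z) ^ 2 + (X₂ z) ^ 2)
    (r : ℂ → ℝ) (hr : ∀ z, r z = Real.sqrt ((X₁ z) ^ 2 + (X₂ z) ^ 2)) :
    ∀ z ∈ U, |lap (fun w => Real.log (r w)) z| ≤ gradSq X₃ z / (r z) ^ 2 := by
  intro z hz
  have hC2 {u : ℂ → ℝ} (hu : ContDiffOn ℝ (⊤ : ℕ∞) u U) : ContDiffAt ℝ 2 u z :=
    (hu.contDiffAt (hU.mem_nhds hz)).of_le (WithTop.coe_le_coe.mpr le_top)
  obtain ⟨harm₁, harm₂, -⟩ := hharm z hz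
  have hQ := hax z hz
  have hlap := lap_log_sqrt_sq_add_sq (hC2 hsm₁) (hC2 hsm₂) harm₁ harm₂ hQ.ne'
  simp only [← hr] at hlap
  have hnull := cgrad_sq_add_sq_add_sq_eq_zero (hconf z hz)
    ((hnormx z hz).trans (hnormy z hz).symm)
  have hbound := abs_sub_le_of_sq_add_sq_add_sq_eq_zero hnull (X₁ z) (X₂ z)
  rw [← hlap, abs_mul, abs_sq, sq_norm_cgrad] at hbound
  rw [hr, Real.sq_sqrt hQ.le, le_div_iff₀ hQ]
  nlinarith

/-- Lemma 2.2 of the paper in a conformal parametrization: for a conformal harmonic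
immersion `X = (X₁, X₂, X₃)` avoiding the `x₃`-axis, with `r = √(X₁² + X₂²)`, one has
`|Δ (log r)| ≤ ‖∇X₃‖² / r²` on `U`. -/
theorem abs_laplacian_log_r_le
    (U : Set ℂ) (hU : IsOpen U) (X₁ X₂ X₃ : ℂ → ℝ)
    (hsm₁ : ContDiffOn ℝ (⊤ : ℕ∞) X₁ U) (hsm₂ : ContDiffOn ℝ (⊤ : ℕ∞) X₂ U)
    (hsm₃ : ContDiffOn ℝ (⊤ : ℕ∞) X₃ U)
    (hharm : ∀ z ∈ U, lap X₁ z = 0 ∧ lap X₂ z = 0 ∧ lap X₃ z = 0)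
    (lam : ℂ → ℝ)
    (hconf : ∀ z ∈ U,
      pdx X₁ z * pdy X₁ z + pdx X₂ z * pdy X₂ z + pdx X₃ z * pdy X₃ z = 0)
    (hnormx : ∀ z ∈ U, (pdx X₁ z) ^ 2 + (pdx X₂ z) ^ 2 + (pdx X₃ z) ^ 2 = (lam z) ^ 2)
    (hnormy : ∀ z ∈ U, (pdy X₁ z) ^ 2 + (pdy X₂ z) ^ 2 + (pdy X₃ z) ^ 2 = (lam z) ^ 2)
    (hlam : ∀ z ∈ U, 0 < lam z)
    (hax : ∀ z ∈ U, 0 < (X₁ z) ^ 2 + (X₂ z) ^ 2)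
    (r : ℂ → ℝ) (hr : ∀ z, r z = Real.sqrt ((X₁ z) ^ 2 + (X₂ z) ^ 2)) :
    ∀ z ∈ U, |lap (fun w => Real.log (r w)) z| ≤ gradSq X₃ z / (r z) ^ 2 :=
  abs_laplacian_log_r_le_general U hU X₁ X₂ X₃ hsm₁ hsm₂ hharm lam hconf hnormx hnormy hax r hr
end

section
/- Let U ⊆ ℂ be open, let X = (X₁, X₂, X₃) : ℂ → ℝ³ be a conformal harmonic immersion on U, and suppose X₁(z)² + X₂(z)² ≥ 1 for every z ∈ U. Then the function h(z) = ½·log(X₁(z)² + X₂(z)²) − X₃(z)² satisfies Δh ≤ 0 on U, i.e. h is superharmonic on U. -/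
open Topology

section DirDeriv

variable {E : Type*} [NormedAddCommGroup E] [NormedSpace ℝ E] {u v : E → ℝ} {z e : E}

noncomputable def dirDeriv (e : E) (u : E → ℝ) (z : E) : ℝ := fderiv ℝ u z e

theorem Filter.EventuallyEq.dirDeriv_eq (h : u =ᶠ[𝓝 z] v) : dirDeriv e u z = dirDeriv e v z := by
  rw [dirDeriv, h.fderiv_eq, dirDeriv]

theorem dirDeriv_add (hu : DifferentiableAt ℝ u z) (hv : DifferentiableAt ℝ v z) :
    dirDeriv e (fun w => u w + v w) z = dirDeriv e u z + dirDeriv e v z := by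
  simp [dirDeriv, fderiv_fun_add hu hv]

theorem dirDeriv_sub (hu : DifferentiableAt ℝ u z) (hv : DifferentiableAt ℝ v z) :
    dirDeriv e (fun w => u w - v w) z = dirDeriv e u z - dirDeriv e v z := by
  simp [dirDeriv, fderiv_fun_sub hu hv]

theorem dirDeriv_const_mul (hu : DifferentiableAt ℝ u z) (c : ℝ) :
    dirDeriv e (fun w => c * u w) z = c * dirDeriv e u z := by
  simp [dirDeriv, fderiv_const_mul hu]

theorem dirDeriv_mul (hu : DifferentiableAt ℝ u z) (hv : DifferentiableAt ℝ v z) :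
    dirDeriv e (fun w => u w * v w) z = u z * dirDeriv e v z + v z * dirDeriv e u z := by
  simp [dirDeriv, fderiv_fun_mul hu hv]

theorem dirDeriv_sq (hu : DifferentiableAt ℝ u z) :
    dirDeriv e (fun w => u w ^ 2) z = 2 * u z * dirDeriv e u z := by
  simp only [sq, dirDeriv_mul hu hu]
  ring

theorem dirDeriv_inv (hu : DifferentiableAt ℝ u z) (h0 : u z ≠ 0) :
    dirDeriv e (fun w => (u w)⁻¹) z = -dirDeriv e u z / u z ^ 2 := by
  have h : HasFDerivAt (fun w => (u w)⁻¹) (-(u z ^ 2)⁻¹ • fderiv ℝ u z) z :=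
    (hasDerivAt_inv h0).comp_hasFDerivAt z hu.hasFDerivAt
  simp [dirDeriv, h.fderiv, div_eq_inv_mul]

theorem dirDeriv_log (hu : DifferentiableAt ℝ u z) (h0 : u z ≠ 0) :
    dirDeriv e (fun w => Real.log (u w)) z = dirDeriv e u z / u z := by
  simp [dirDeriv, (hu.hasFDerivAt.log h0).fderiv, div_eq_inv_mul]

theorem ContDiffAt.eventually_differentiableAt_s5 {n : WithTop ℕ∞} (hu : ContDiffAt ℝ n u z)
    (hn : 1 ≤ n) : ∀ᶠ w in 𝓝 z, DifferentiableAt ℝ u w :=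
  ((hu.of_le hn).eventually (by simp)).mono fun _ hw => hw.differentiableAt one_ne_zero

theorem ContDiffAt.differentiableAt_dirDeriv (hu : ContDiffAt ℝ 2 u z) (e : E) :
    DifferentiableAt ℝ (dirDeriv e u) z :=
  ((hu.fderiv_right (m := 1) le_rfl).differentiableAt one_ne_zero).clm_apply
    (differentiableAt_const e)

theorem dirDeriv_dirDeriv_add (hu : ContDiffAt ℝ 2 u z) (hv : ContDiffAt ℝ 2 v z) :
    dirDeriv e (dirDeriv e fun w => u w + v w) z =
      dirDeriv e (dirDeriv e u) z + dirDeriv e (dirDeriv e v) z := by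
  have h : dirDeriv e (fun w => u w + v w) =ᶠ[𝓝 z] fun w => dirDeriv e u w + dirDeriv e v w := by
    filter_upwards [hu.eventually_differentiableAt_s5 one_le_two,
      hv.eventually_differentiableAt_s5 one_le_two] with w hu hv
    exact dirDeriv_add hu hv
  rw [h.dirDeriv_eq, dirDeriv_add (hu.differentiableAt_dirDeriv e) (hv.differentiableAt_dirDeriv e)]

theorem dirDeriv_dirDeriv_sub (hu : ContDiffAt ℝ 2 u z) (hv : ContDiffAt ℝ 2 v z) :
    dirDeriv e (dirDeriv e fun w => u w - v w) z =
      dirDeriv e (dirDeriv e u) z - dirDeriv e (dirDeriv e v) z := by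
  have h : dirDeriv e (fun w => u w - v w) =ᶠ[𝓝 z] fun w => dirDeriv e u w - dirDeriv e v w := by
    filter_upwards [hu.eventually_differentiableAt_s5 one_le_two,
      hv.eventually_differentiableAt_s5 one_le_two] with w hu hv
    exact dirDeriv_sub hu hv
  rw [h.dirDeriv_eq, dirDeriv_sub (hu.differentiableAt_dirDeriv e) (hv.differentiableAt_dirDeriv e)]

theorem dirDeriv_dirDeriv_const_mul (hu : ContDiffAt ℝ 2 u z) (c : ℝ) :
    dirDeriv e (dirDeriv e fun w => c * u w) z = c * dirDeriv e (dirDeriv e u) z := by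
  have h : dirDeriv e (fun w => c * u w) =ᶠ[𝓝 z] fun w => c * dirDeriv e u w := by
    filter_upwards [hu.eventually_differentiableAt_s5 one_le_two] with w hu
    exact dirDeriv_const_mul hu c
  rw [h.dirDeriv_eq, dirDeriv_const_mul (hu.differentiableAt_dirDeriv e)]

theorem dirDeriv_dirDeriv_mul (hu : ContDiffAt ℝ 2 u z) (hv : ContDiffAt ℝ 2 v z) :
    dirDeriv e (dirDeriv e fun w => u w * v w) z =
      u z * dirDeriv e (dirDeriv e v) z + v z * dirDeriv e (dirDeriv e u) z +
        2 * (dirDeriv e u z * dirDeriv e v z) := by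
  have h : dirDeriv e (fun w => u w * v w) =ᶠ[𝓝 z]
      fun w => u w * dirDeriv e v w + v w * dirDeriv e u w := by
    filter_upwards [hu.eventually_differentiableAt_s5 one_le_two,
      hv.eventually_differentiableAt_s5 one_le_two] with w hu hv
    exact dirDeriv_mul hu hv
  have hu₁ := hu.differentiableAt two_ne_zero
  have hv₁ := hv.differentiableAt two_ne_zero
  have hu₂ := hu.differentiableAt_dirDeriv e
  have hv₂ := hv.differentiableAt_dirDeriv e
  rw [h.dirDeriv_eq, dirDeriv_add (hu₁.fun_mul hv₂) (hv₁.fun_mul hu₂), dirDeriv_mul hu₁ hv₂,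
    dirDeriv_mul hv₁ hu₂]
  ring

theorem dirDeriv_dirDeriv_log (hu : ContDiffAt ℝ 2 u z) (h0 : u z ≠ 0) :
    dirDeriv e (dirDeriv e fun w => Real.log (u w)) z =
      dirDeriv e (dirDeriv e u) z / u z - (dirDeriv e u z / u z) ^ 2 := by
  have h : dirDeriv e (fun w => Real.log (u w)) =ᶠ[𝓝 z] fun w => dirDeriv e u w * (u w)⁻¹ := by
    filter_upwards [hu.eventually_differentiableAt_s5 one_le_two,
      hu.continuousAt.eventually_ne h0] with w hw hw0
    rw [dirDeriv_log hw hw0, div_eq_mul_inv]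
  have hu₁ := hu.differentiableAt two_ne_zero
  rw [h.dirDeriv_eq, dirDeriv_mul (hu.differentiableAt_dirDeriv e) (hu₁.fun_inv h0),
    dirDeriv_inv hu₁ h0]
  field_simp
  ring

end DirDeriv

section Laplacian

variable {u v : ℂ → ℝ} {z : ℂ}

theorem pdx_eq_dirDeriv (u : ℂ → ℝ) : pdx u = dirDeriv 1 u := rfl

theorem pdy_eq_dirDeriv (u : ℂ → ℝ) : pdy u = dirDeriv Complex.I u := rfl

theorem lap_eq_dirDeriv (u : ℂ → ℝ) (z : ℂ) :
    lap u z = dirDeriv 1 (dirDeriv 1 u) z + dirDeriv Complex.I (dirDeriv Complex.I u) z :=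
  rfl

theorem lap_add (hu : ContDiffAt ℝ 2 u z) (hv : ContDiffAt ℝ 2 v z) :
    lap (fun w => u w + v w) z = lap u z + lap v z := by
  simp only [lap_eq_dirDeriv, dirDeriv_dirDeriv_add hu hv]
  ring

theorem lap_sub (hu : ContDiffAt ℝ 2 u z) (hv : ContDiffAt ℝ 2 v z) :
    lap (fun w => u w - v w) z = lap u z - lap v z := by
  simp only [lap_eq_dirDeriv, dirDeriv_dirDeriv_sub hu hv]
  ring

theorem lap_const_mul (hu : ContDiffAt ℝ 2 u z) (c : ℝ) :
    lap (fun w => c * u w) z = c * lap u z := by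
  simp only [lap_eq_dirDeriv, dirDeriv_dirDeriv_const_mul hu]
  ring

theorem lap_sq (hu : ContDiffAt ℝ 2 u z) :
    lap (fun w => u w ^ 2) z = 2 * u z * lap u z + 2 * (pdx u z ^ 2 + pdy u z ^ 2) := by
  simp only [sq, lap_eq_dirDeriv, pdx_eq_dirDeriv, pdy_eq_dirDeriv, dirDeriv_dirDeriv_mul hu hu]
  ring

theorem lap_log (hu : ContDiffAt ℝ 2 u z) (h0 : u z ≠ 0) :
    lap (fun w => Real.log (u w)) z = lap u z / u z - (pdx u z ^ 2 + pdy u z ^ 2) / u z ^ 2 := by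
  simp only [lap_eq_dirDeriv, pdx_eq_dirDeriv, pdy_eq_dirDeriv, dirDeriv_dirDeriv_log hu h0]
  field_simp
  ring

theorem lap_log_sq_add_sq (hu : ContDiffAt ℝ 2 u z) (hv : ContDiffAt ℝ 2 v z)
    (hu₀ : lap u z = 0) (hv₀ : lap v z = 0) (h0 : u z ^ 2 + v z ^ 2 ≠ 0) :
    lap (fun w => Real.log (u w ^ 2 + v w ^ 2)) z =
      2 * ((pdx u z ^ 2 + pdx v z ^ 2 + pdy u z ^ 2 + pdy v z ^ 2) * (u z ^ 2 + v z ^ 2) -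
        2 * ((u z * pdx u z + v z * pdx v z) ^ 2 + (u z * pdy u z + v z * pdy v z) ^ 2)) /
          (u z ^ 2 + v z ^ 2) ^ 2 := by
  have hu₁ := hu.differentiableAt two_ne_zero
  have hv₁ := hv.differentiableAt two_ne_zero
  rw [lap_log ((hu.pow 2).add (hv.pow 2)) h0, lap_add (hu.pow 2) (hv.pow 2), lap_sq hu, lap_sq hv,
    hu₀, hv₀]
  simp only [pdx_eq_dirDeriv, pdy_eq_dirDeriv, dirDeriv_add (hu₁.fun_pow 2) (hv₁.fun_pow 2),
    dirDeriv_sq hu₁, dirDeriv_sq hv₁]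
  field_simp
  ring

end Laplacian

/-- The left side is the pairing of `(p, q)` below with `(x₂² - x₁², -2 x₁ x₂)`, a vector of length
`x₁² + x₂²`, and orthogonality with equal norms forces `p² + q² = (a₃² + b₃²)²`. -/
theorem conformal_horizontal_bound {a₁ a₂ a₃ b₁ b₂ b₃ : ℝ} (horth : a₁ * b₁ + a₂ * b₂ + a₃ * b₃ = 0)
    (hnorm : a₁ ^ 2 + a₂ ^ 2 + a₃ ^ 2 = b₁ ^ 2 + b₂ ^ 2 + b₃ ^ 2) (x₁ x₂ : ℝ) :
    (a₁ ^ 2 + a₂ ^ 2 + b₁ ^ 2 + b₂ ^ 2) * (x₁ ^ 2 + x₂ ^ 2) -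
        2 * ((x₁ * a₁ + x₂ * a₂) ^ 2 + (x₁ * b₁ + x₂ * b₂) ^ 2) ≤
      (a₃ ^ 2 + b₃ ^ 2) * (x₁ ^ 2 + x₂ ^ 2) := by
  set p := a₁ ^ 2 - a₂ ^ 2 + b₁ ^ 2 - b₂ ^ 2
  set q := 2 * (a₁ * a₂ + b₁ * b₂)
  have hpq : p ^ 2 + q ^ 2 = (a₃ ^ 2 + b₃ ^ 2) ^ 2 := by
    linear_combination (a₁ ^ 2 + a₂ ^ 2 - b₁ ^ 2 - b₂ ^ 2 + b₃ ^ 2 - a₃ ^ 2) * hnorm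
      + (4 * (a₁ * b₁ + a₂ * b₂) - 4 * a₃ * b₃) * horth
  have hlhs : (a₁ ^ 2 + a₂ ^ 2 + b₁ ^ 2 + b₂ ^ 2) * (x₁ ^ 2 + x₂ ^ 2) -
        2 * ((x₁ * a₁ + x₂ * a₂) ^ 2 + (x₁ * b₁ + x₂ * b₂) ^ 2) =
      p * (x₂ ^ 2 - x₁ ^ 2) - q * (2 * x₁ * x₂) := by ring
  rw [hlhs]
  refine le_of_sq_le_sq ?_ (by positivity)
  calc (p * (x₂ ^ 2 - x₁ ^ 2) - q * (2 * x₁ * x₂)) ^ 2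
      ≤ (p * (x₂ ^ 2 - x₁ ^ 2) - q * (2 * x₁ * x₂)) ^ 2 +
          (p * (2 * x₁ * x₂) + q * (x₂ ^ 2 - x₁ ^ 2)) ^ 2 := le_add_of_nonneg_right (sq_nonneg _)
    _ = (p ^ 2 + q ^ 2) * (x₁ ^ 2 + x₂ ^ 2) ^ 2 := by ring
    _ = ((a₃ ^ 2 + b₃ ^ 2) * (x₁ ^ 2 + x₂ ^ 2)) ^ 2 := by rw [hpq]; ring

theorem h_superharmonic_general
    (U : Set ℂ) (hU : IsOpen U) (X₁ X₂ X₃ : ℂ → ℝ)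
    (hsm₁ : ContDiffOn ℝ (⊤ : ℕ∞) X₁ U) (hsm₂ : ContDiffOn ℝ (⊤ : ℕ∞) X₂ U)
    (hsm₃ : ContDiffOn ℝ (⊤ : ℕ∞) X₃ U)
    (hharm : ∀ z ∈ U, lap X₁ z = 0 ∧ lap X₂ z = 0 ∧ lap X₃ z = 0)
    (lam : ℂ → ℝ)
    (hconf : ∀ z ∈ U,
      pdx X₁ z * pdy X₁ z + pdx X₂ z * pdy X₂ z + pdx X₃ z * pdy X₃ z = 0)
    (hnormx : ∀ z ∈ U, (pdx X₁ z) ^ 2 + (pdx X₂ z) ^ 2 + (pdx X₃ z) ^ 2 = (lam z) ^ 2)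
    (hnormy : ∀ z ∈ U, (pdy X₁ z) ^ 2 + (pdy X₂ z) ^ 2 + (pdy X₃ z) ^ 2 = (lam z) ^ 2)
    (hbig : ∀ z ∈ U, 1 ≤ (X₁ z) ^ 2 + (X₂ z) ^ 2) :
    ∀ z ∈ U,
      lap (fun w => (1 / 2) * Real.log ((X₁ w) ^ 2 + (X₂ w) ^ 2) - (X₃ w) ^ 2) z ≤ 0 := by
  intro z hz
  have hC2 : ∀ {X : ℂ → ℝ}, ContDiffOn ℝ (⊤ : ℕ∞) X U → ContDiffAt ℝ 2 X z :=
    fun hX => (hX.contDiffAt (hU.mem_nhds hz)).of_le (WithTop.coe_le_coe.mpr le_top)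
  obtain ⟨h₁, h₂, h₃⟩ := hharm z hz
  have hF : 1 ≤ X₁ z ^ 2 + X₂ z ^ 2 := hbig z hz
  have hF₀ : X₁ z ^ 2 + X₂ z ^ 2 ≠ 0 := (zero_lt_one.trans_le hF).ne'
  have hlog : ContDiffAt ℝ 2 (fun w => Real.log (X₁ w ^ 2 + X₂ w ^ 2)) z :=
    (((hC2 hsm₁).pow 2).add ((hC2 hsm₂).pow 2)).log hF₀
  rw [lap_sub (contDiffAt_const.mul hlog) ((hC2 hsm₃).pow 2), lap_const_mul hlog,
    lap_log_sq_add_sq (hC2 hsm₁) (hC2 hsm₂) h₁ h₂ hF₀, lap_sq (hC2 hsm₃), h₃]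
  have hhoriz := conformal_horizontal_bound (hconf z hz) ((hnormx z hz).trans (hnormy z hz).symm)
    (X₁ z) (X₂ z)
  set c := pdx X₃ z ^ 2 + pdy X₃ z ^ 2
  set F := X₁ z ^ 2 + X₂ z ^ 2
  have hc : 0 ≤ c := by positivity
  have hcF : c * F / F ^ 2 ≤ c := by
    rw [sq, ← div_div, mul_div_cancel_right₀ c hF₀]
    exact div_le_self hc hF
  have hhoriz' := div_le_div_of_nonneg_right hhoriz (sq_nonneg F)
  rw [mul_div_assoc]
  linarith

/-- For a conformal harmonic immersion `X = (X₁, X₂, X₃)` on `U` with `X₁² + X₂² ≥ 1`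
on `U`, the function `h = ½ log(X₁² + X₂²) − X₃²` is superharmonic on `U`
(key to Theorem 3.1 of the paper). -/
theorem h_superharmonic
    (U : Set ℂ) (hU : IsOpen U) (X₁ X₂ X₃ : ℂ → ℝ)
    (hsm₁ : ContDiffOn ℝ (⊤ : ℕ∞) X₁ U) (hsm₂ : ContDiffOn ℝ (⊤ : ℕ∞) X₂ U)
    (hsm₃ : ContDiffOn ℝ (⊤ : ℕ∞) X₃ U)
    (hharm : ∀ z ∈ U, lap X₁ z = 0 ∧ lap X₂ z = 0 ∧ lap X₃ z = 0)
    (lam : ℂ → ℝ)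
    (hconf : ∀ z ∈ U,
      pdx X₁ z * pdy X₁ z + pdx X₂ z * pdy X₂ z + pdx X₃ z * pdy X₃ z = 0)
    (hnormx : ∀ z ∈ U, (pdx X₁ z) ^ 2 + (pdx X₂ z) ^ 2 + (pdx X₃ z) ^ 2 = (lam z) ^ 2)
    (hnormy : ∀ z ∈ U, (pdy X₁ z) ^ 2 + (pdy X₂ z) ^ 2 + (pdy X₃ z) ^ 2 = (lam z) ^ 2)
    (hlam : ∀ z ∈ U, 0 < lam z)
    (hbig : ∀ z ∈ U, 1 ≤ (X₁ z) ^ 2 + (X₂ z) ^ 2) :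
    ∀ z ∈ U,
      lap (fun w => (1 / 2) * Real.log ((X₁ w) ^ 2 + (X₂ w) ^ 2) - (X₃ w) ^ 2) z ≤ 0 :=
  h_superharmonic_general U hU X₁ X₂ X₃ hsm₁ hsm₂ hsm₃ hharm lam hconf hnormx hnormy hbig
end

section
/- Let U ⊆ ℂ be open and let X = (X₁, X₂, X₃) : ℂ → ℝ³ be continuously differentiable on U, conformal at every z ∈ U in the sense that ⟨∂ₓX(z), ∂_yX(z)⟩ = 0 and ‖∂ₓX(z)‖ = ‖∂_yX(z)‖ = λ(z), and suppose X₁(z)² + X₂(z)² > 0 on U. Set r(z) = √(X₁(z)² + X₂(z)²). Then for every z ∈ U one has ‖∇r(z)‖² + ‖∇X₃(z)‖² ≥ λ(z)². (This is the inequality |∇_M r|² + |∇_M x₃|² ≥ 1 on a surface in ℝ³ away from the x₃-axis, expressed in a conformal parametrization.) -/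
/-!
The partial derivatives `a = ∂ₓX`, `b = ∂_yX` are orthogonal of length `λ`, so
`n = a × b / λ²` is a unit normal. With `e = (X₁, X₂, 0) / r`, the vectors `e`, `e₃` and
`e × e₃` form an orthonormal basis of `ℝ³`, and the defect `‖∇r‖² + ‖∇X₃‖² - λ²` equals
`λ² (1 - ⟨n, e⟩² - ⟨n, e₃⟩²) = λ² ⟨n, e × e₃⟩² ≥ 0`.
-/

/-- The defect identity times `r² λ²`; the right side is `⟨a × b, (x₂, -x₁, 0)⟩²`. -/
lemma conformal_defect_mul_sq_eq {x₁ x₂ a₁ a₂ a₃ b₁ b₂ b₃ l : ℝ}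
    (hab : a₁ * b₁ + a₂ * b₂ + a₃ * b₃ = 0)
    (ha : a₁ ^ 2 + a₂ ^ 2 + a₃ ^ 2 = l ^ 2) (hb : b₁ ^ 2 + b₂ ^ 2 + b₃ ^ 2 = l ^ 2) :
    ((x₁ * a₁ + x₂ * a₂) ^ 2 + (x₁ * b₁ + x₂ * b₂) ^ 2
        + (x₁ ^ 2 + x₂ ^ 2) * (a₃ ^ 2 + b₃ ^ 2) - (x₁ ^ 2 + x₂ ^ 2) * l ^ 2) * l ^ 2
      = (x₂ * (a₂ * b₃ - a₃ * b₂) - x₁ * (a₃ * b₁ - a₁ * b₃)) ^ 2 := by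
  linear_combination
    ((x₁ ^ 2 + x₂ ^ 2) * (a₁ * b₁ + a₂ * b₂ + a₃ * b₃)
        - 2 * (x₂ * a₁ - x₁ * a₂) * (x₂ * b₁ - x₁ * b₂)) * hab
    + ((x₂ * b₁ - x₁ * b₂) ^ 2 - (x₁ ^ 2 + x₂ ^ 2) * (b₁ ^ 2 + b₂ ^ 2 + b₃ ^ 2 - l ^ 2)) * ha
    + (x₂ * a₁ - x₁ * a₂) ^ 2 * hb

lemma sq_add_sq_mul_sq_le_of_conformal {x₁ x₂ a₁ a₂ a₃ b₁ b₂ b₃ l : ℝ}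
    (hab : a₁ * b₁ + a₂ * b₂ + a₃ * b₃ = 0)
    (ha : a₁ ^ 2 + a₂ ^ 2 + a₃ ^ 2 = l ^ 2) (hb : b₁ ^ 2 + b₂ ^ 2 + b₃ ^ 2 = l ^ 2) :
    (x₁ ^ 2 + x₂ ^ 2) * l ^ 2 ≤ (x₁ * a₁ + x₂ * a₂) ^ 2 + (x₁ * b₁ + x₂ * b₂) ^ 2
        + (x₁ ^ 2 + x₂ ^ 2) * (a₃ ^ 2 + b₃ ^ 2) := by
  rcases eq_or_ne l 0 with rfl | hl
  · simp only [ne_eq, OfNat.ofNat_ne_zero, not_false_eq_true, zero_pow, mul_zero]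
    positivity
  · rw [← sub_nonneg]
    refine nonneg_of_mul_nonneg_left ?_ (pow_pos (abs_pos.mpr hl) 2)
    rw [sq_abs, conformal_defect_mul_sq_eq hab ha hb]
    positivity

lemma fderiv_sqrt_sq_add_sq_apply {E : Type*} [NormedAddCommGroup E] [NormedSpace ℝ E]
    {f g : E → ℝ} {x : E} (hf : DifferentiableAt ℝ f x) (hg : DifferentiableAt ℝ g x)
    (hfg : f x ^ 2 + g x ^ 2 ≠ 0) (v : E) :
    fderiv ℝ (fun y ↦ √(f y ^ 2 + g y ^ 2)) x v
      = (f x * fderiv ℝ f x v + g x * fderiv ℝ g x v) / √(f x ^ 2 + g x ^ 2) := by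
  have hsq := (hf.hasFDerivAt.pow 2).fun_add (hg.hasFDerivAt.pow 2)
  rw [(hsq.sqrt hfg).fderiv]
  simp only [add_apply, smul_apply, smul_eq_mul, nsmul_eq_mul, Nat.cast_ofNat, Nat.add_one_sub_one, pow_one]
  field_simp

lemma gradSq_sqrt_sq_add_sq {f g : ℂ → ℝ} {z : ℂ} (hf : DifferentiableAt ℝ f z)
    (hg : DifferentiableAt ℝ g z) (hfg : 0 < f z ^ 2 + g z ^ 2) :
    gradSq (fun w ↦ √(f w ^ 2 + g w ^ 2)) z
      = ((f z * pdx f z + g z * pdx g z) ^ 2 + (f z * pdy f z + g z * pdy g z) ^ 2)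
          / (f z ^ 2 + g z ^ 2) := by
  simp only [gradSq, pdx, pdy, fderiv_sqrt_sq_add_sq_apply hf hg hfg.ne']
  rw [div_pow, div_pow, Real.sq_sqrt hfg.le, add_div]

theorem gradSq_r_add_gradSq_x3_ge_general
    (U : Set ℂ) (hU : IsOpen U) (X₁ X₂ X₃ : ℂ → ℝ)
    (hsm₁ : ContDiffOn ℝ 1 X₁ U) (hsm₂ : ContDiffOn ℝ 1 X₂ U)
    (lam : ℂ → ℝ)
    (hconf : ∀ z ∈ U,
      pdx X₁ z * pdy X₁ z + pdx X₂ z * pdy X₂ z + pdx X₃ z * pdy X₃ z = 0)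
    (hnormx : ∀ z ∈ U, (pdx X₁ z) ^ 2 + (pdx X₂ z) ^ 2 + (pdx X₃ z) ^ 2 = (lam z) ^ 2)
    (hnormy : ∀ z ∈ U, (pdy X₁ z) ^ 2 + (pdy X₂ z) ^ 2 + (pdy X₃ z) ^ 2 = (lam z) ^ 2)
    (hax : ∀ z ∈ U, 0 < (X₁ z) ^ 2 + (X₂ z) ^ 2)
    (r : ℂ → ℝ) (hr : ∀ z, r z = Real.sqrt ((X₁ z) ^ 2 + (X₂ z) ^ 2)) :
    ∀ z ∈ U, gradSq r z + gradSq X₃ z ≥ (lam z) ^ 2 := by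
  intro z hz
  have hdiff {f : ℂ → ℝ} (hf : ContDiffOn ℝ 1 f U) : DifferentiableAt ℝ f z :=
    (hf.differentiableOn one_ne_zero).differentiableAt (hU.mem_nhds hz)
  have hpos := hax z hz
  have hdefect := sq_add_sq_mul_sq_le_of_conformal (x₁ := X₁ z) (x₂ := X₂ z)
    (hconf z hz) (hnormx z hz) (hnormy z hz)
  rw [funext hr, gradSq_sqrt_sq_add_sq (hdiff hsm₁) (hdiff hsm₂) hpos, gradSq, ge_iff_le,
    ← sub_le_iff_le_add, le_div_iff₀ hpos]
  linarith

/-- For a `C¹` conformal map `X = (X₁, X₂, X₃) : U → ℝ³` with conformal factor `λ`,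
avoiding the `x₃`-axis, and `r = √(X₁² + X₂²)`, one has
`‖∇r‖² + ‖∇X₃‖² ≥ λ²` on `U` (the inequality `|∇_M r|² + |∇_M x₃|² ≥ 1` of Lemma 2.1). -/
theorem gradSq_r_add_gradSq_x3_ge
    (U : Set ℂ) (hU : IsOpen U) (X₁ X₂ X₃ : ℂ → ℝ)
    (hsm₁ : ContDiffOn ℝ 1 X₁ U) (hsm₂ : ContDiffOn ℝ 1 X₂ U)
    (hsm₃ : ContDiffOn ℝ 1 X₃ U)
    (lam : ℂ → ℝ)
    (hconf : ∀ z ∈ U,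
      pdx X₁ z * pdy X₁ z + pdx X₂ z * pdy X₂ z + pdx X₃ z * pdy X₃ z = 0)
    (hnormx : ∀ z ∈ U, (pdx X₁ z) ^ 2 + (pdx X₂ z) ^ 2 + (pdx X₃ z) ^ 2 = (lam z) ^ 2)
    (hnormy : ∀ z ∈ U, (pdy X₁ z) ^ 2 + (pdy X₂ z) ^ 2 + (pdy X₃ z) ^ 2 = (lam z) ^ 2)
    (hax : ∀ z ∈ U, 0 < (X₁ z) ^ 2 + (X₂ z) ^ 2)
    (r : ℂ → ℝ) (hr : ∀ z, r z = Real.sqrt ((X₁ z) ^ 2 + (X₂ z) ^ 2)) :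
    ∀ z ∈ U, gradSq r z + gradSq X₃ z ≥ (lam z) ^ 2 :=
  gradSq_r_add_gradSq_x3_ge_general U hU X₁ X₂ X₃ hsm₁ hsm₂ lam hconf hnormx hnormy hax r hr
end

section
/- Let U ⊆ ℂ be open. Suppose h : closure(U) → ℝ is continuous, nonnegative, has compact sublevel sets (i.e. {z ∈ closure(U) : h(z) ≤ c} is compact for every real c), and is twice continuously differentiable on U with Δh ≤ 0 on U. If f : closure(U) → ℝ is bounded, continuous, harmonic on U, and vanishes on the frontier closure(U) \ U, then f vanishes identically on closure(U). (In particular, bounded harmonic functions on U that extend continuously to closure(U) are determined by their boundary values: any two such functions agreeing on the frontier are equal.) -/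
open Filter Topology InnerProductSpace Laplacian

theorem IsLocalMax.deriv_deriv_nonpos {φ : ℝ → ℝ} {t : ℝ} (hmax : IsLocalMax φ t)
    (hc : ContinuousAt φ t) : deriv (deriv φ) t ≤ 0 := by
  by_contra! hpos
  have hconst : φ =ᶠ[𝓝 t] fun _ => φ t :=
    (hmax.and (isLocalMin_of_deriv_deriv_pos hpos hmax.deriv_eq_zero hc)).mono
      fun s hs => le_antisymm hs.1 hs.2
  have hzero : deriv (deriv φ) t = 0 := by simp [hconst.deriv.deriv_eq]
  exact hpos.ne' hzero

section NormedSpace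

variable {E : Type*} [NormedAddCommGroup E] [NormedSpace ℝ E] {u : E → ℝ} {x : E}

theorem ContDiffAt.fderiv_fderiv_apply (hu : ContDiffAt ℝ 2 u x) (v w : E) :
    fderiv ℝ (fun y => fderiv ℝ u y v) x w = iteratedFDeriv ℝ 2 u x ![w, v] := by
  have hd : DifferentiableAt ℝ (fderiv ℝ u) x :=
    (hu.fderiv_right (m := 1) (by norm_num)).differentiableAt (by norm_num)
  simp [iteratedFDeriv_two_apply, fderiv_clm_apply hd (differentiableAt_const v)]

theorem ContDiffAt.deriv_deriv_comp_line (hu : ContDiffAt ℝ 2 u x) (v : E) :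
    deriv (deriv fun t : ℝ => u (x + t • v)) 0 = iteratedFDeriv ℝ 2 u x ![v, v] := by
  have hline : ∀ t : ℝ, HasDerivAt (fun t : ℝ => x + t • v) v t := fun t => by
    simpa using ((hasDerivAt_id t).smul_const v).const_add x
  have hline_tendsto : Tendsto (fun t : ℝ => x + t • v) (𝓝 0) (𝓝 x) := by
    simpa using (hline 0).continuousAt.tendsto
  have hderiv :
      deriv (fun t : ℝ => u (x + t • v)) =ᶠ[𝓝 0] fun t => fderiv ℝ u (x + t • v) v := by
    filter_upwards [hline_tendsto.eventually (hu.eventually (by simp))] with t ht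
    exact ((ht.differentiableAt (by norm_num)).hasFDerivAt.comp_hasDerivAt t (hline t)).deriv
  have hψ : DifferentiableAt ℝ (fun y => fderiv ℝ u y v) x :=
    ((hu.fderiv_right (m := 1) (by norm_num)).differentiableAt (by norm_num)).clm_apply
      (differentiableAt_const v)
  rw [hderiv.deriv_eq, ← hu.fderiv_fderiv_apply]
  exact (hψ.hasFDerivAt.comp_hasDerivAt_of_eq 0 (hline 0) (by simp)).deriv

theorem IsLocalMax.iteratedFDeriv_two_nonpos (hmax : IsLocalMax u x) (hu : ContDiffAt ℝ 2 u x)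
    (v : E) : iteratedFDeriv ℝ 2 u x ![v, v] ≤ 0 := by
  rw [← hu.deriv_deriv_comp_line]
  have hline : Continuous fun t : ℝ => x + t • v := by fun_prop
  exact IsLocalMax.deriv_deriv_nonpos (IsLocalMax.comp_continuous (by simpa using hmax)
    hline.continuousAt) (hu.continuousAt.comp_of_eq hline.continuousAt (by simp))

end NormedSpace

section InnerProductSpace

variable {E : Type*} [NormedAddCommGroup E] [InnerProductSpace ℝ E] [FiniteDimensional ℝ E]

theorem IsLocalMax.laplacian_nonpos {u : E → ℝ} {x : E} (hmax : IsLocalMax u x)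
    (hu : ContDiffAt ℝ 2 u x) : Δ u x ≤ 0 := by
  rw [laplacian_eq_iteratedFDeriv_stdOrthonormalBasis]
  exact Finset.sum_nonpos fun i _ => hmax.iteratedFDeriv_two_nonpos hu _

theorem laplacian_norm_sq (x : E) :
    Δ (fun y : E => ‖y‖ ^ 2) x = 2 * Module.finrank ℝ E := by
  have h2 : ∀ v w : E, fderiv ℝ (fderiv ℝ fun y : E => ‖y‖ ^ 2) x v w = 2 * inner ℝ v w := by
    intro v w
    rw [fderiv_norm_sq, ← FunLike.coe_smul, ContinuousLinearMap.fderiv]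
    simp only [smul_apply, nsmul_eq_mul, Nat.cast_ofNat]
    rfl
  simp [laplacian_eq_iteratedFDeriv_stdOrthonormalBasis, iteratedFDeriv_two_apply, h2, mul_comm]

theorem laplacian_sub_smul_add_smul_norm_sq_pos [Nontrivial E] {f h : E → ℝ} {x : E}
    (hf : ContDiffAt ℝ 2 f x) (hh : ContDiffAt ℝ 2 h x) (hfsub : 0 ≤ Δ f x)
    (hsuper : Δ h x ≤ 0) {ε δ : ℝ} (hε : 0 ≤ ε) (hδ : 0 < δ) :
    0 < Δ (f - ε • h + δ • fun y : E => ‖y‖ ^ 2) x := by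
  have hq : ContDiffAt ℝ 2 (fun y : E => ‖y‖ ^ 2) x := (contDiff_norm_sq ℝ).contDiffAt
  have hεh : ContDiffAt ℝ 2 (ε • h) x := hh.const_smul ε
  have hfεh : ContDiffAt ℝ 2 (f - ε • h) x := hf.sub hεh
  have hδq : ContDiffAt ℝ 2 (δ • fun y : E => ‖y‖ ^ 2) x := hq.const_smul δ
  rw [hfεh.laplacian_add hδq, hf.laplacian_sub hεh, laplacian_smul _ hh, laplacian_smul _ hq,
    laplacian_norm_sq]
  have : 0 < (Module.finrank ℝ E : ℝ) := by exact_mod_cast Module.finrank_pos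
  simp only [smul_eq_mul]
  nlinarith [mul_nonneg hε (neg_nonneg.2 hsuper)]

end InnerProductSpace

theorem lap_eq_laplacian {u : ℂ → ℝ} {z : ℂ} (hu : ContDiffAt ℝ 2 u z) : lap u z = Δ u z := by
  rw [laplacian_eq_iteratedFDeriv_complexPlane]
  beta_reduce
  rw [← hu.fderiv_fderiv_apply, ← hu.fderiv_fderiv_apply]
  rfl

theorem setOf_closure_le_mem_nhds {X : Type*} [TopologicalSpace X] {U : Set X} {h : X → ℝ}
    {c : ℝ} {z : X} (hU : U ∈ 𝓝 z) (hh : ContinuousAt h z) (hc : h z < c) :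
    {y ∈ closure U | h y ≤ c} ∈ 𝓝 z := by
  filter_upwards [hU, hh.eventually (gt_mem_nhds hc)] with y hyU hyc
  exact ⟨subset_closure hyU, hyc.le⟩

section MaximumPrinciple

variable {E : Type*} [NormedAddCommGroup E] [InnerProductSpace ℝ E] [FiniteDimensional ℝ E]
  [Nontrivial E] {U : Set E} {f h : E → ℝ} {M : ℝ}

theorem le_const_mul_of_proper_superharmonic (hU : IsOpen U)
    (hcont : ContinuousOn h (closure U)) (hnonneg : ∀ z ∈ closure U, 0 ≤ h z)
    (hproper : ∀ c : ℝ, IsCompact {z ∈ closure U | h z ≤ c})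
    (hC2 : ContDiffOn ℝ 2 h U) (hsuper : ∀ z ∈ U, Δ h z ≤ 0)
    (hfM : ∀ z ∈ closure U, f z ≤ M) (hfcont : ContinuousOn f (closure U))
    (hfC2 : ContDiffOn ℝ 2 f U) (hfsub : ∀ z ∈ U, 0 ≤ Δ f z)
    (hfbdry : ∀ z ∈ closure U \ U, f z ≤ 0) {ε : ℝ} (hε : 0 < ε) :
    ∀ z ∈ closure U, f z ≤ ε * h z := by
  by_contra! ⟨z₁, hz₁, hlt⟩
  set K := {z ∈ closure U | h z ≤ M / ε}
  have hz₁K : z₁ ∈ K := ⟨hz₁, by rw [le_div_iff₀ hε]; linarith [hfM z₁ hz₁]⟩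
  obtain ⟨R, hR⟩ := (hproper (M / ε)).isBounded.exists_norm_le
  set δ := (f z₁ - ε * h z₁) / (R ^ 2 + 1)
  have hδ : 0 < δ := div_pos (by linarith) (by positivity)
  set G := f - ε • h + δ • fun y : E => ‖y‖ ^ 2
  have hGcont : ContinuousOn G K :=
    ((hfcont.mono fun z hz => hz.1).sub ((hcont.mono fun z hz => hz.1).const_smul ε)).add
      (by fun_prop)
  obtain ⟨zm, hzmK, hmax⟩ := (hproper (M / ε)).exists_isMaxOn ⟨z₁, hz₁K⟩ hGcont
  have hsmall : ∀ z ∈ K, f z ≤ ε * h z → G z < G z₁ := by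
    intro z hz hfz
    have hzR : ‖z‖ ^ 2 ≤ R ^ 2 := pow_le_pow_left₀ (norm_nonneg z) (hR z hz) 2
    have hδR : δ * R ^ 2 < f z₁ - ε * h z₁ := by
      rw [div_mul_eq_mul_div, div_lt_iff₀ (by positivity)]
      nlinarith
    simp only [G, Pi.add_apply, Pi.sub_apply, Pi.smul_apply, smul_eq_mul]
    nlinarith [mul_le_mul_of_nonneg_left hzR hδ.le, mul_nonneg hδ.le (sq_nonneg ‖z₁‖)]
  have hzm : ε * h zm < f zm := not_le.1 fun hle => (hsmall zm hzmK hle).not_ge (hmax hz₁K)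
  have hzmU : zm ∈ U := by
    by_contra hzmU
    linarith [hfbdry zm ⟨hzmK.1, hzmU⟩, mul_nonneg hε.le (hnonneg zm hzmK.1)]
  have hzm_lt : h zm < M / ε := by
    rw [lt_div_iff₀ hε]
    linarith [hfM zm hzmK.1]
  have hUnhds : U ∈ 𝓝 zm := hU.mem_nhds hzmU
  have hhC2 : ContDiffAt ℝ 2 h zm := hC2.contDiffAt hUnhds
  have hfC2' : ContDiffAt ℝ 2 f zm := hfC2.contDiffAt hUnhds
  have hKnhds : K ∈ 𝓝 zm := setOf_closure_le_mem_nhds hUnhds hhC2.continuousAt hzm_lt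
  have hGC2 : ContDiffAt ℝ 2 G zm :=
    (hfC2'.sub (hhC2.const_smul ε)).add ((contDiff_norm_sq ℝ).contDiffAt.const_smul δ)
  exact ((hmax.isLocalMax hKnhds).laplacian_nonpos hGC2).not_gt
    (laplacian_sub_smul_add_smul_norm_sq_pos hfC2' hhC2 (hfsub zm hzmU) (hsuper zm hzmU) hε.le hδ)

theorem nonpos_of_proper_superharmonic (hU : IsOpen U)
    (hcont : ContinuousOn h (closure U)) (hnonneg : ∀ z ∈ closure U, 0 ≤ h z)
    (hproper : ∀ c : ℝ, IsCompact {z ∈ closure U | h z ≤ c})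
    (hC2 : ContDiffOn ℝ 2 h U) (hsuper : ∀ z ∈ U, Δ h z ≤ 0)
    (hfM : ∀ z ∈ closure U, f z ≤ M) (hfcont : ContinuousOn f (closure U))
    (hfC2 : ContDiffOn ℝ 2 f U) (hfsub : ∀ z ∈ U, 0 ≤ Δ f z)
    (hfbdry : ∀ z ∈ closure U \ U, f z ≤ 0) :
    ∀ z ∈ closure U, f z ≤ 0 := by
  intro z hz
  have hlim : Tendsto (fun ε => ε * h z) (𝓝[>] 0) (𝓝 0) :=
    ((continuous_mul_const (h z)).tendsto' 0 0 (zero_mul _)).mono_left nhdsWithin_le_nhds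
  refine ge_of_tendsto hlim ?_
  filter_upwards [self_mem_nhdsWithin] with ε hε
  exact le_const_mul_of_proper_superharmonic hU hcont hnonneg hproper hC2 hsuper hfM hfcont hfC2
    hfsub hfbdry hε z hz

end MaximumPrinciple

/-- Parabolicity criterion (Section 3 of the paper, for planar domains): if a proper
nonnegative superharmonic function exists on `closure U`, then every bounded continuous
function on `closure U` which is harmonic on `U` and vanishes on the frontier
`closure U \ U` vanishes identically. -/
theorem parabolicity_criterion
    (U : Set ℂ) (hU : IsOpen U) (h : ℂ → ℝ)
    (hcont : ContinuousOn h (closure U))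
    (hnonneg : ∀ z ∈ closure U, 0 ≤ h z)
    (hproper : ∀ c : ℝ, IsCompact {z ∈ closure U | h z ≤ c})
    (hC2 : ContDiffOn ℝ 2 h U)
    (hsuper : ∀ z ∈ U, lap h z ≤ 0)
    (f : ℂ → ℝ)
    (hfbdd : ∃ M : ℝ, ∀ z ∈ closure U, |f z| ≤ M)
    (hfcont : ContinuousOn f (closure U))
    (hfsm : ContDiffOn ℝ (⊤ : ℕ∞) f U)
    (hfharm : ∀ z ∈ U, lap f z = 0)
    (hfbdry : ∀ z ∈ closure U \ U, f z = 0) :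
    ∀ z ∈ closure U, f z = 0 := by
  obtain ⟨M, hM⟩ := hfbdd
  have hfC2 : ContDiffOn ℝ 2 f U := hfsm.of_le (WithTop.coe_le_coe.2 le_top)
  have hlap : ∀ u : ℂ → ℝ, ContDiffOn ℝ 2 u U → ∀ z ∈ U, lap u z = Δ u z :=
    fun u hu z hz => lap_eq_laplacian (hu.contDiffAt (hU.mem_nhds hz))
  have hsuperΔ : ∀ z ∈ U, Δ h z ≤ 0 := fun z hz => hlap h hC2 z hz ▸ hsuper z hz
  have hharm : ∀ z ∈ U, Δ f z = 0 := fun z hz => hlap f hfC2 z hz ▸ hfharm z hz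
  have hle := nonpos_of_proper_superharmonic hU hcont hnonneg hproper hC2 hsuperΔ
    (fun z hz => (le_abs_self _).trans (hM z hz)) hfcont hfC2 (fun z hz => (hharm z hz).ge)
    (fun z hz => (hfbdry z hz).le)
  have hge := nonpos_of_proper_superharmonic (f := -f) hU hcont hnonneg hproper hC2 hsuperΔ
    (fun z hz => (neg_le_abs _).trans (hM z hz)) hfcont.neg hfC2.neg
    (fun z hz => by simp [laplacian_neg, hharm z hz]) (fun z hz => by simp [hfbdry z hz])
  exact fun z hz => le_antisymm (hle z hz) (neg_nonpos.1 (hge z hz))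
end

section
/- Let U ⊆ ℂ be open with compact frontier closure(U) \ U, let V be an open set containing closure(U), and let h : ℂ → ℝ be smooth on V such that h ≥ 0 on closure(U), the sublevel set {z ∈ closure(U) : h(z) ≤ c} is compact for every real c, and Δh ≤ 0 on U. Then Δh is Lebesgue-integrable on U, i.e. ∫_U |Δh| dA < ∞. -/
open MeasureTheory

/-!
Take a smooth cutoff `θ ≥ 0` vanishing near the complement of `U` and near its frontier, equal
to `1` on `U` outside a compact neighbourhood `K` of the frontier, and for `c : ℝ` a smooth
nonincreasing `ψ` equal to `1` on `(-∞, c]` and to `0` on `[c + 1, ∞)`. Since `h` is proper,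
`φ = θ · ψ ∘ h` has compact support in `U`, and integrating by parts,
`∫ φ (-Δh) = ∫ ∇φ · ∇h = ∫ ψ(h) ∇θ · ∇h + ∫ θ ψ'(h) |∇h|² ≤ ∫ |∂ₓθ ∂ₓh| + ∫ |∂ᵧθ ∂ᵧh|`
(as `θ ≥ 0`, `ψ' ≤ 0` and `|ψ| ≤ 1`), a bound independent of `c`. As `-Δh ≥ 0` on `U`, monotone convergence along the sublevel sets
`{h ≤ c}` makes `Δh` integrable on `U \ K`, and it is continuous on the compact set `K`.
-/

open Set Filter Topology Real
open scoped Manifold ContDiff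

section General

variable {E : Type*} [NormedAddCommGroup E] [NormedSpace ℝ E]

theorem ContDiffOn.contDiff_of_tsupport_subset {F : Type*} [NormedAddCommGroup F]
    [NormedSpace ℝ F] {n : WithTop ℕ∞} {f : E → F} {V : Set E} (hf : ContDiffOn ℝ n f V)
    (hV : IsOpen V) (hfV : tsupport f ⊆ V) : ContDiff ℝ n f := by
  refine contDiff_iff_contDiffAt.2 fun x => ?_
  by_cases hx : x ∈ V
  · exact hf.contDiffAt (hV.mem_nhds hx)
  · exact contDiffAt_const.congr_of_eventuallyEq
      (notMem_tsupport_iff_eventuallyEq.1 fun h => hx (hfV h))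

theorem ContDiff.mul_comp_of_tsupport_subset {n : WithTop ℕ∞} {V : Set E} (hV : IsOpen V)
    {θ : E → ℝ} (hθ : ContDiff ℝ n θ) (hθV : tsupport θ ⊆ V) {ψ : ℝ → ℝ} (hψ : ContDiff ℝ n ψ)
    {h : E → ℝ} (hh : ContDiffOn ℝ n h V) : ContDiff ℝ n fun x => θ x * ψ (h x) :=
  (hθ.contDiffOn.mul (hψ.comp_contDiffOn hh)).contDiff_of_tsupport_subset hV
    (tsupport_mul_subset_left.trans hθV)

theorem ContDiffOn.continuousOn_fderiv_fderiv_apply {V : Set E} (hV : IsOpen V) {h : E → ℝ}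
    (hh : ContDiffOn ℝ 2 h V) (v w : E) :
    ContinuousOn (fun x => fderiv ℝ (fun y => fderiv ℝ h y v) x w) V :=
  (((hh.fderiv_of_isOpen hV (by norm_num)).clm_apply contDiffOn_const).continuousOn_fderiv_of_isOpen
    hV le_rfl).clm_apply continuousOn_const

theorem fderiv_mul_comp_apply_mul_le {V : Set E} (hV : IsOpen V) {θ : E → ℝ}
    (hθ : Differentiable ℝ θ) (hθ0 : ∀ x, 0 ≤ θ x) (hθV : tsupport θ ⊆ V) {ψ : ℝ → ℝ}
    (hψ : Differentiable ℝ ψ) (hψanti : Antitone ψ) (hψ1 : ∀ t, |ψ t| ≤ 1) {h : E → ℝ}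
    (hh : DifferentiableOn ℝ h V) (x v : E) :
    fderiv ℝ (fun y => θ y * ψ (h y)) x v * fderiv ℝ h x v ≤ |fderiv ℝ θ x v * fderiv ℝ h x v| := by
  by_cases hx : x ∈ V
  · have hhx := (hh.differentiableAt (hV.mem_nhds hx)).hasFDerivAt
    have hφ : HasFDerivAt (fun y => θ y * ψ (h y)) _ x :=
      (hθ x).hasFDerivAt.mul ((hψ (h x)).hasDerivAt.comp_hasFDerivAt x hhx)
    rw [hφ.fderiv]
    simp only [add_apply, smul_apply, smul_eq_mul]
    have hψ'_term : θ x * (deriv ψ (h x) * fderiv ℝ h x v) * fderiv ℝ h x v ≤ 0 := by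
      have := mul_nonpos_of_nonneg_of_nonpos (hθ0 x) (hψanti.deriv_nonpos (x := h x))
      nlinarith [mul_self_nonneg (fderiv ℝ h x v)]
    calc _ = θ x * (deriv ψ (h x) * fderiv ℝ h x v) * fderiv ℝ h x v
          + ψ (h x) * (fderiv ℝ θ x v * fderiv ℝ h x v) := by ring
      _ ≤ |ψ (h x)| * |fderiv ℝ θ x v * fderiv ℝ h x v| := by
          rw [← abs_mul]; linarith [le_abs_self (ψ (h x) * (fderiv ℝ θ x v * fderiv ℝ h x v))]
      _ ≤ |fderiv ℝ θ x v * fderiv ℝ h x v| :=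
          mul_le_of_le_one_left (abs_nonneg _) (hψ1 _)
  · have hx' : x ∉ tsupport fun y => θ y * ψ (h y) :=
      fun hx' => hx (hθV (tsupport_mul_subset_left hx'))
    simp only [fderiv_of_notMem_tsupport ℝ hx', zero_apply, zero_mul]
    exact abs_nonneg _

theorem hasCompactSupport_fderiv_of_eventuallyEq_one {U K : Set E} {θ : E → ℝ}
    (hK : IsCompact K) (hθU : tsupport θ ⊆ U) (hθ1 : ∀ x ∈ U \ K, θ =ᶠ[𝓝 x] 1) :
    HasCompactSupport (fderiv ℝ θ) := by
  refine HasCompactSupport.intro hK fun x hxK => ?_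
  by_cases hxU : x ∈ U
  · rw [(hθ1 x ⟨hxU, hxK⟩).fderiv_eq]
    exact fderiv_const_apply 1
  · exact fderiv_of_notMem_tsupport ℝ fun hx => hxU (hθU hx)

theorem exists_contDiff_eventuallyEq_one_of_isCompact_frontier [FiniteDimensional ℝ E]
    {U : Set E} (hU : IsOpen U) (hfr : IsCompact (closure U \ U)) :
    ∃ (θ : E → ℝ) (K : Set E), ContDiff ℝ ∞ θ ∧ (∀ x, 0 ≤ θ x) ∧ tsupport θ ⊆ U ∧
      IsCompact K ∧ K ⊆ closure U ∧ ∀ x ∈ U \ K, θ =ᶠ[𝓝 x] 1 := by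
  set F := closure U \ U
  have hdisj : Disjoint (Uᶜ ∪ Metric.cthickening 1 F) (closure U \ Metric.thickening 2 F) := by
    refine disjoint_left.2 fun x hxA hxB => hxB.2 ?_
    rcases hxA with hxU | hx1
    · exact Metric.self_subset_thickening two_pos F ⟨hxB.1, hxU⟩
    · exact Metric.cthickening_subset_thickening' two_pos one_lt_two F hx1
  obtain ⟨θ, hθ0, hθ1, hθ01⟩ := exists_contMDiffMap_zero_one_nhds_of_isClosed 𝓘(ℝ, E)
    (n := (⊤ : ℕ∞)) (hU.isClosed_compl.union Metric.isClosed_cthickening)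
    (isClosed_closure.sdiff Metric.isOpen_thickening) hdisj
  refine ⟨θ, closure U ∩ Metric.cthickening 2 F, contMDiff_iff_contDiff.1 θ.contMDiff,
    fun x => (hθ01 x).1, fun x hx => ?_, hfr.cthickening.inter_left isClosed_closure,
    inter_subset_left, fun x hx => ?_⟩
  · by_contra hxU
    exact notMem_tsupport_iff_eventuallyEq.2
      (eventually_nhdsSet_iff_forall.1 hθ0 x (Or.inl hxU)) hx
  · refine eventually_nhdsSet_iff_forall.1 hθ1 x ⟨subset_closure hx.1, fun hx2 => hx.2 ?_⟩
    exact ⟨subset_closure hx.1, Metric.thickening_subset_cthickening 2 F hx2⟩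

end General

theorem integrableOn_of_setIntegral_inter_le {α : Type*} [MeasurableSpace α] {μ : Measure α}
    {f : α → ℝ} {s : Set α} {t : ℕ → Set α} (C : ℝ) (hs : MeasurableSet s)
    (ht : ∀ n, MeasurableSet (t n)) (hst : ∀ x ∈ s, ∀ᶠ n in atTop, x ∈ t n)
    (hf : ∀ n, IntegrableOn f (t n ∩ s) μ) (hf0 : ∀ x ∈ s, 0 ≤ f x)
    (hC : ∀ n, ∫ x in t n ∩ s, f x ∂μ ≤ C) : IntegrableOn f s μ := by
  have hcover : AECover (μ.restrict s) atTop t :=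
    aecover_restrict_of_ae_imp hs (ae_of_all _ hst) ht
  refine hcover.integrable_of_integral_bounded_of_nonneg_ae C (fun n => ?_)
    ((ae_restrict_iff' hs).2 (ae_of_all _ hf0)) (Eventually.of_forall fun n => ?_)
  · rw [IntegrableOn, Measure.restrict_restrict (ht n)]
    exact hf n
  · rw [Measure.restrict_restrict (ht n)]
    exact hC n

section Integration

variable {E : Type*} [NormedAddCommGroup E] [NormedSpace ℝ E] [MeasurableSpace E] [BorelSpace E]

theorem integrable_mul_of_tsupport_subset {μ : Measure E} [IsFiniteMeasureOnCompacts μ]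
    {V : Set E} (hV : IsOpen V) {f g : E → ℝ} (hf : Continuous f) (hfc : HasCompactSupport f)
    (hfV : tsupport f ⊆ V) (hg : ContinuousOn g V) : Integrable (fun x => f x * g x) μ := by
  have hfg : ContDiff ℝ 0 fun x => f x * g x :=
    (contDiffOn_zero.2 (hf.continuousOn.mul hg)).contDiff_of_tsupport_subset hV
      (tsupport_mul_subset_left.trans hfV)
  exact hfg.continuous.integrable_of_hasCompactSupport hfc.mul_right

variable [FiniteDimensional ℝ E] {μ : Measure E} [μ.IsAddHaarMeasure]

theorem integral_mul_fderiv_fderiv_eq_neg {V : Set E} (hV : IsOpen V) {h : E → ℝ}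
    (hh : ContDiffOn ℝ 2 h V) {φ : E → ℝ} (hφ : ContDiff ℝ 1 φ) (hφc : HasCompactSupport φ)
    (hφV : tsupport φ ⊆ V) (v : E) :
    ∫ x, φ x * fderiv ℝ (fun y => fderiv ℝ h y v) x v ∂μ
      = -∫ x, fderiv ℝ φ x v * fderiv ℝ h x v ∂μ := by
  have hdh : ContDiffOn ℝ 1 (fun y => fderiv ℝ h y v) V :=
    (hh.fderiv_of_isOpen hV (by norm_num)).clm_apply contDiffOn_const
  refine integral_mul_fderiv_eq_neg_fderiv_mul_of_integrable ?_ ?_ ?_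
    (fun x _ => hφ.differentiable one_ne_zero x)
    (fun x hx => (hdh.differentiableOn one_ne_zero).differentiableAt (hV.mem_nhds (hφV hx)))
  · exact integrable_mul_of_tsupport_subset hV ((hφ.continuous_fderiv one_ne_zero).clm_apply
      continuous_const) (hφc.fderiv_apply ℝ v) ((tsupport_fderiv_apply_subset ℝ v).trans hφV)
      hdh.continuousOn
  · exact integrable_mul_of_tsupport_subset hV hφ.continuous hφc hφV
      (hh.continuousOn_fderiv_fderiv_apply hV v v)
  · exact integrable_mul_of_tsupport_subset hV hφ.continuous hφc hφV hdh.continuousOn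

theorem integral_mul_comp_mul_neg_fderiv_fderiv_le {V : Set E} (hV : IsOpen V) {θ : E → ℝ}
    (hθ : ContDiff ℝ 1 θ) (hθ0 : ∀ x, 0 ≤ θ x) (hθV : tsupport θ ⊆ V)
    (hθ' : HasCompactSupport (fderiv ℝ θ)) {ψ : ℝ → ℝ} (hψ : ContDiff ℝ 1 ψ)
    (hψanti : Antitone ψ) (hψ1 : ∀ t, |ψ t| ≤ 1) {h : E → ℝ} (hh : ContDiffOn ℝ 2 h V)
    (hφc : HasCompactSupport fun x => θ x * ψ (h x)) (v : E) :
    ∫ x, θ x * ψ (h x) * -fderiv ℝ (fun y => fderiv ℝ h y v) x v ∂μ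
      ≤ ∫ x, |fderiv ℝ θ x v * fderiv ℝ h x v| ∂μ := by
  have hφ := hθ.mul_comp_of_tsupport_subset hV hθV hψ (hh.of_le one_le_two)
  have hφV : tsupport (fun x => θ x * ψ (h x)) ⊆ V := tsupport_mul_subset_left.trans hθV
  have hdh : ContinuousOn (fun x => fderiv ℝ h x v) V :=
    (hh.continuousOn_fderiv_of_isOpen hV one_le_two).clm_apply continuousOn_const
  have hφdh : Integrable (fun x => fderiv ℝ (fun y => θ y * ψ (h y)) x v * fderiv ℝ h x v) μ :=
    integrable_mul_of_tsupport_subset hV ((hφ.continuous_fderiv one_ne_zero).clm_apply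
      continuous_const) (hφc.fderiv_apply ℝ v) ((tsupport_fderiv_apply_subset ℝ v).trans hφV) hdh
  have hθdh : Integrable (fun x => |fderiv ℝ θ x v * fderiv ℝ h x v|) μ :=
    (integrable_mul_of_tsupport_subset hV ((hθ.continuous_fderiv one_ne_zero).clm_apply
      continuous_const) (hθ'.comp_left (g := fun L : E →L[ℝ] ℝ => L v) rfl)
      ((tsupport_fderiv_apply_subset ℝ v).trans hθV) hdh).abs
  calc ∫ x, θ x * ψ (h x) * -fderiv ℝ (fun y => fderiv ℝ h y v) x v ∂μ
      = ∫ x, fderiv ℝ (fun y => θ y * ψ (h y)) x v * fderiv ℝ h x v ∂μ := by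
        simp_rw [mul_neg, integral_neg, integral_mul_fderiv_fderiv_eq_neg hV hh hφ hφc hφV, neg_neg]
    _ ≤ ∫ x, |fderiv ℝ θ x v * fderiv ℝ h x v| ∂μ :=
        integral_mono hφdh hθdh fun x => fderiv_mul_comp_apply_mul_le hV
          (hθ.differentiable one_ne_zero) hθ0 hθV (hψ.differentiable one_ne_zero) hψanti hψ1
          (hh.differentiableOn two_ne_zero) x v

end Integration

theorem ContDiffOn.continuousOn_lap {V : Set ℂ} (hV : IsOpen V) {h : ℂ → ℝ}
    (hh : ContDiffOn ℝ 2 h V) : ContinuousOn (lap h) V :=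
  (hh.continuousOn_fderiv_fderiv_apply hV 1 1).add
    (hh.continuousOn_fderiv_fderiv_apply hV Complex.I Complex.I)

theorem integral_mul_comp_mul_neg_lap_le {V : Set ℂ} (hV : IsOpen V) {θ : ℂ → ℝ}
    (hθ : ContDiff ℝ 1 θ) (hθ0 : ∀ z, 0 ≤ θ z) (hθV : tsupport θ ⊆ V)
    (hθ' : HasCompactSupport (fderiv ℝ θ)) {ψ : ℝ → ℝ} (hψ : ContDiff ℝ 1 ψ)
    (hψanti : Antitone ψ) (hψ1 : ∀ t, |ψ t| ≤ 1) {h : ℂ → ℝ} (hh : ContDiffOn ℝ 2 h V)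
    (hφc : HasCompactSupport fun z => θ z * ψ (h z)) :
    ∫ z, θ z * ψ (h z) * -lap h z
      ≤ (∫ z, |pdx θ z * pdx h z|) + ∫ z, |pdy θ z * pdy h z| := by
  have hφ := (hθ.mul_comp_of_tsupport_subset hV hθV hψ (hh.of_le one_le_two)).continuous
  have hint (v : ℂ) :
      Integrable fun z => θ z * ψ (h z) * -fderiv ℝ (fun y => fderiv ℝ h y v) z v :=
    integrable_mul_of_tsupport_subset hV hφ hφc (tsupport_mul_subset_left.trans hθV)
      (hh.continuousOn_fderiv_fderiv_apply hV v v).neg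
  have hdir (v : ℂ) := integral_mul_comp_mul_neg_fderiv_fderiv_le (μ := volume) hV hθ hθ0 hθV hθ'
    hψ hψanti hψ1 hh hφc v
  calc ∫ z, θ z * ψ (h z) * -lap h z
      = ∫ z, (θ z * ψ (h z) * -fderiv ℝ (fun y => fderiv ℝ h y 1) z 1
          + θ z * ψ (h z) * -fderiv ℝ (fun y => fderiv ℝ h y Complex.I) z Complex.I) := by
        congr 1; ext z; rw [lap, neg_add, mul_add]; rfl
    _ = _ := integral_add (hint 1) (hint Complex.I)
    _ ≤ (∫ z, |pdx θ z * pdx h z|) + ∫ z, |pdy θ z * pdy h z| :=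
        add_le_add (hdir 1) (hdir Complex.I)

theorem setIntegral_sublevel_inter_neg_lap_le {U V S : Set ℂ} (hV : IsOpen V) (hUV : U ⊆ V)
    {θ : ℂ → ℝ} (hθ : ContDiff ℝ 1 θ) (hθ0 : ∀ z, 0 ≤ θ z) (hθU : tsupport θ ⊆ U)
    (hθ' : HasCompactSupport (fderiv ℝ θ)) (hS : MeasurableSet S) (hθS : ∀ z ∈ S, θ z = 1)
    {h : ℂ → ℝ} (hh : ContDiffOn ℝ 2 h V) (hproper : ∀ c : ℝ, IsCompact {z ∈ closure U | h z ≤ c})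
    (hsuper : ∀ z ∈ U, lap h z ≤ 0) (c : ℝ) :
    ∫ z in {z ∈ closure U | h z ≤ c} ∩ S, -lap h z
      ≤ (∫ z, |pdx θ z * pdx h z|) + ∫ z, |pdy θ z * pdy h z| := by
  set ψ : ℝ → ℝ := fun t => smoothTransition (c + 1 - t)
  have hψ : ContDiff ℝ 1 ψ := smoothTransition.contDiff.comp (contDiff_const.sub contDiff_id)
  have hψanti : Antitone ψ :=
    smoothTransition.monotone.comp_antitone fun a b hab => by linarith
  have hψ1 (t : ℝ) : |ψ t| ≤ 1 :=
    abs_le.2 ⟨by linarith [smoothTransition.nonneg (c + 1 - t)], smoothTransition.le_one _⟩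
  have hθV := hθU.trans hUV
  have hθ_of_notMem {z : ℂ} (hz : z ∉ U) : θ z = 0 :=
    image_eq_zero_of_notMem_tsupport fun hz' => hz (hθU hz')
  have hφc : HasCompactSupport fun z => θ z * ψ (h z) := by
    refine HasCompactSupport.intro (hproper (c + 1)) fun z hz => ?_
    by_cases hzU : z ∈ U
    · have hψz : c + 1 - h z ≤ 0 := by
        simp only [mem_ofPred_eq, not_and, not_le] at hz
        linarith [hz (subset_closure hzU)]
      simp [ψ, smoothTransition.zero_of_nonpos hψz]
    · simp [hθ_of_notMem hzU]
  have hint : Integrable fun z => θ z * ψ (h z) * -lap h z :=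
    integrable_mul_of_tsupport_subset hV
      (hθ.mul_comp_of_tsupport_subset hV hθV hψ (hh.of_le one_le_two)).continuous hφc
      (tsupport_mul_subset_left.trans hθV) (hh.continuousOn_lap hV).neg
  have hnonneg (z : ℂ) : 0 ≤ θ z * ψ (h z) * -lap h z := by
    by_cases hzU : z ∈ U
    · exact mul_nonneg (mul_nonneg (hθ0 z) (smoothTransition.nonneg _))
        (neg_nonneg.2 (hsuper z hzU))
    · simp [hθ_of_notMem hzU]
  calc ∫ z in {z ∈ closure U | h z ≤ c} ∩ S, -lap h z
      = ∫ z in {z ∈ closure U | h z ≤ c} ∩ S, θ z * ψ (h z) * -lap h z :=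
        setIntegral_congr_fun ((hproper c).measurableSet.inter hS) fun z hz => by
          have hψz : 1 ≤ c + 1 - h z := by linarith [hz.1.2]
          simp [ψ, hθS z hz.2, smoothTransition.one_of_one_le hψz]
    _ ≤ ∫ z, θ z * ψ (h z) * -lap h z :=
        setIntegral_le_integral hint (Eventually.of_forall hnonneg)
    _ ≤ _ := integral_mul_comp_mul_neg_lap_le hV hθ hθ0 hθV hθ' hψ hψanti hψ1 hh hφc

theorem laplacian_superharmonic_integrable_general
    (U : Set ℂ) (hU : IsOpen U) (hfr : IsCompact (closure U \ U))
    (V : Set ℂ) (hV : IsOpen V) (hUV : closure U ⊆ V)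
    (h : ℂ → ℝ) (hsm : ContDiffOn ℝ (⊤ : ℕ∞) h V)
    (hproper : ∀ c : ℝ, IsCompact {z ∈ closure U | h z ≤ c})
    (hsuper : ∀ z ∈ U, lap h z ≤ 0) :
    IntegrableOn (fun z => lap h z) U volume := by
  obtain ⟨θ, K, hθ, hθ0, hθU, hK, hKU, hθ1⟩ :=
    exists_contDiff_eventuallyEq_one_of_isCompact_frontier hU hfr
  have hh : ContDiffOn ℝ 2 h V := hsm.of_le (by norm_cast)
  have hlap := hh.continuousOn_lap hV
  have hS : MeasurableSet (U \ K) := hU.measurableSet.diff hK.measurableSet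
  have hcover (z : ℂ) (hz : z ∈ U \ K) : ∀ᶠ n : ℕ in atTop, z ∈ {w ∈ closure U | h w ≤ n} :=
    (eventually_ge_atTop ⌈h z⌉₊).mono fun n hn =>
      ⟨subset_closure hz.1, (Nat.le_ceil (h z)).trans (by exact_mod_cast hn)⟩
  have hsublevel (n : ℕ) :
      IntegrableOn (fun z => -lap h z) ({z ∈ closure U | h z ≤ n} ∩ (U \ K)) :=
    ((hlap.neg.mono ((sep_subset _ _).trans hUV)).integrableOn_compact (hproper n)).mono_set
      inter_subset_left
  have hbound (n : ℕ) := setIntegral_sublevel_inter_neg_lap_le hV (subset_closure.trans hUV)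
    (hθ.of_le (by norm_num)) hθ0 hθU (hasCompactSupport_fderiv_of_eventuallyEq_one hK hθU hθ1) hS
    (fun z hz => (hθ1 z hz).self_of_nhds) hh hproper hsuper n
  have hUK : IntegrableOn (fun z => lap h z) (U \ K) := by
    simpa using (integrableOn_of_setIntegral_inter_le _ hS (fun n => (hproper n).measurableSet)
      hcover hsublevel (fun z hz => neg_nonneg.2 (hsuper z hz.1)) hbound).neg
  have hKint : IntegrableOn (fun z => lap h z) K :=
    (hlap.mono (hKU.trans hUV)).integrableOn_compact hK
  exact (hUK.union hKint).mono_set (by rw [sdiff_union_self]; exact subset_union_left)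

/-- Planar version of the claim in Lemma 2.1 of the paper: a proper nonnegative
superharmonic function `h` on a domain `U` with compact frontier (smooth on a
neighborhood `V` of `closure U`) has `Δh ∈ L¹(U)`. -/
theorem laplacian_superharmonic_integrable
    (U : Set ℂ) (hU : IsOpen U) (hfr : IsCompact (closure U \ U))
    (V : Set ℂ) (hV : IsOpen V) (hUV : closure U ⊆ V)
    (h : ℂ → ℝ) (hsm : ContDiffOn ℝ (⊤ : ℕ∞) h V)
    (hnonneg : ∀ z ∈ closure U, 0 ≤ h z)
    (hproper : ∀ c : ℝ, IsCompact {z ∈ closure U | h z ≤ c})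
    (hsuper : ∀ z ∈ U, lap h z ≤ 0) :
    IntegrableOn (fun z => lap h z) U volume :=
  laplacian_superharmonic_integrable_general U hU hfr V hV hUV h hsm hproper hsuper
end

section
/- Let λ ≥ 1, a ≥ 0 and c > π/2 − 1/λ, and let f(t) = −t·arctan(t) + ½·log(t² + 1). Then for every K ∈ ℝ there exists R₀ > 1 such that for every r ≥ R₀ and every t ∈ ℝ with log r − a ≤ t ≤ λ·log r + a, one has log r + c·t + f(t) ≥ K. (That is, the function h_c = log r + c·x₃ + f(x₃) tends to +∞ along every divergent sequence of points in a region lying between a catenoid end of logarithmic growth 1 below and a catenoid end of logarithmic growth λ above.) -/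
/-! Since `|arctan t| < π/2` and `log (t² + 1) ≥ 0`, we have `f t ≥ -(π/2) |t|`. Once `log r ≥ a` the
region forces `t ≥ 0`, so `h_c ≥ log r + (c - π/2) t`, which is linear in `t` and hence minimal at an
endpoint of `[0, λ log r + a]`: `h_c ≥ min (log r) ((1 + λ (c - π/2)) log r + (c - π/2) a)`. The
hypothesis on `c` says exactly that `1 + λ (c - π/2) > 0`, so both terms tend to `+∞`. -/

open Real Filter Set

lemma neg_pi_div_two_mul_abs_le (t : ℝ) :
    -(π / 2) * |t| ≤ -t * arctan t + 1 / 2 * log (t ^ 2 + 1) := by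
  have harctan : |arctan t| ≤ π / 2 :=
    abs_le.2 ⟨(neg_pi_div_two_lt_arctan t).le, (arctan_lt_pi_div_two t).le⟩
  have hmul : t * arctan t ≤ π / 2 * |t| :=
    calc t * arctan t ≤ |t| * |arctan t| := (le_abs_self _).trans (abs_mul _ _).le
      _ ≤ π / 2 * |t| := by nlinarith [abs_nonneg t]
  have hlog : 0 ≤ log (t ^ 2 + 1) := log_nonneg (by nlinarith)
  linarith

lemma min_le_mul_of_mem_Icc {μ t T : ℝ} (ht : t ∈ Icc 0 T) : min 0 (μ * T) ≤ μ * t := by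
  obtain ⟨ht₀, htT⟩ := ht
  rcases le_total 0 μ with hμ | hμ
  · exact min_le_of_left_le (mul_nonneg hμ ht₀)
  · exact min_le_of_right_le (mul_le_mul_of_nonpos_left htT hμ)

lemma min_le_add_mul_add_of_mem_Icc {lam a c s t : ℝ} (hs : a ≤ s)
    (ht : t ∈ Icc (s - a) (lam * s + a)) :
    min s ((1 + lam * (c - π / 2)) * s + (c - π / 2) * a) ≤
      s + c * t + (-t * arctan t + 1 / 2 * log (t ^ 2 + 1)) := by
  have ht₀ : 0 ≤ t := by linarith [ht.1]
  have hf := neg_pi_div_two_mul_abs_le t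
  rw [abs_of_nonneg ht₀] at hf
  have hlin := min_le_mul_of_mem_Icc (μ := c - π / 2) ⟨ht₀, ht.2⟩
  have hmin : min s ((1 + lam * (c - π / 2)) * s + (c - π / 2) * a) =
      s + min 0 ((c - π / 2) * (lam * s + a)) := by
    rw [← min_add_add_left, add_zero]
    ring_nf
  linarith

theorem h_c_tendsto_top_general
    (lam a c : ℝ) (hlam : 1 ≤ lam)
    (hc : c > Real.pi / 2 - 1 / lam)
    (f : ℝ → ℝ)
    (hf : ∀ t, f t = -t * Real.arctan t + (1 / 2) * Real.log (t ^ 2 + 1)) :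
    ∀ K : ℝ, ∃ R₀ : ℝ, R₀ > 1 ∧ ∀ r : ℝ, r ≥ R₀ → ∀ t : ℝ,
      Real.log r - a ≤ t → t ≤ lam * Real.log r + a →
      Real.log r + c * t + f t ≥ K := by
  intro K
  have hδ : 0 < 1 + lam * (c - π / 2) := by
    have := mul_lt_mul_of_pos_left (show -(1 / lam) < c - π / 2 by linarith)
      (zero_lt_one.trans_le hlam)
    rw [mul_neg, mul_one_div_cancel (by positivity)] at this
    linarith
  have hupper : Tendsto (fun r => (1 + lam * (c - π / 2)) * log r + (c - π / 2) * a)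
      atTop atTop :=
    tendsto_atTop_add_const_right _ _ (tendsto_log_atTop.const_mul_atTop hδ)
  obtain ⟨R, hR⟩ := eventually_atTop.1 <|
    (tendsto_log_atTop.eventually_ge_atTop (max K a)).and (hupper.eventually_ge_atTop K)
  refine ⟨max R 2, by simp, fun r hr t ht₁ ht₂ => ?_⟩
  obtain ⟨hlog, hKupper⟩ := hR r (le_of_max_le_left hr)
  rw [hf]
  exact (le_min (le_of_max_le_left hlog) hKupper).trans
    (min_le_add_mul_add_of_mem_Icc (le_of_max_le_right hlog) ⟨ht₁, ht₂⟩)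

/-- In a region between catenoid ends of logarithmic growths `1` and `λ ≥ 1`
(so `log r − a ≤ t ≤ λ log r + a`), for `c > π/2 − 1/λ` the function
`h_c = log r + c t + f(t)`, with `f(t) = −t arctan t + ½ log(t² + 1)`,
tends to `+∞` as `r → ∞` (Lemma 3.5 of the paper). -/
theorem h_c_tendsto_top
    (lam a c : ℝ) (hlam : 1 ≤ lam) (ha : 0 ≤ a)
    (hc : c > Real.pi / 2 - 1 / lam)
    (f : ℝ → ℝ)
    (hf : ∀ t, f t = -t * Real.arctan t + (1 / 2) * Real.log (t ^ 2 + 1)) :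
    ∀ K : ℝ, ∃ R₀ : ℝ, R₀ > 1 ∧ ∀ r : ℝ, r ≥ R₀ → ∀ t : ℝ,
      Real.log r - a ≤ t → t ≤ lam * Real.log r + a →
      Real.log r + c * t + f t ≥ K :=
  h_c_tendsto_top_general lam a c hlam hc f hf
end

section
/- Let λ ≥ 1, a ≥ 0 and c < π/2 − 1, and let f(t) = −t·arctan(t) + ½·log(t² + 1). Then for every K ∈ ℝ there exists R₀ > 1 such that for every r ≥ R₀ and every t ∈ ℝ with log r − a ≤ t ≤ λ·log r + a, one has log r + c·t + f(t) ≤ −K. (That is, the function h_c = log r + c·x₃ + f(x₃) tends to −∞ along every divergent sequence of points in a region lying between a catenoid end of logarithmic growth 1 below and a catenoid end of logarithmic growth λ above.) -/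
/-!
In the region, `log r ≤ t + a`, so `h_c ≤ a + (1 + c) t + f t`. Since `f t = -t arctan t + o(t)`
and `arctan t → π/2 > 1 + c`, the right-hand side tends to `-∞` as `t → ∞`, and `t ≥ log r - a`
is large once `r` is.
-/

open Real Filter Asymptotics

lemma isLittleO_log_sq_add_one_atTop : (fun t : ℝ => log (t ^ 2 + 1)) =o[atTop] id := by
  have hsq : Tendsto (fun t : ℝ => t ^ 2 + 1) atTop atTop :=
    tendsto_atTop_add_const_right _ 1 (tendsto_pow_atTop two_ne_zero)
  refine ((isLittleO_log_rpow_atTop one_half_pos).comp_tendsto hsq).trans_isBigO <|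
    IsBigO.of_bound 2 ?_
  filter_upwards [eventually_ge_atTop 1] with t ht
  rw [Function.comp_apply, ← sqrt_eq_rpow, id, norm_of_nonneg (sqrt_nonneg _),
    norm_of_nonneg (by linarith)]
  exact sqrt_le_iff.2 ⟨by linarith, by nlinarith⟩

lemma tendsto_mul_add_neg_mul_arctan_add_log_atBot {b : ℝ} (hb : b < π / 2) :
    Tendsto (fun t => b * t + (-t * arctan t + 1 / 2 * log (t ^ 2 + 1))) atTop atBot := by
  have hlim : Tendsto (fun t => b - arctan t + 1 / 2 * (log (t ^ 2 + 1) / t)) atTop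
      (nhds (b - π / 2 + 1 / 2 * 0)) :=
    ((tendsto_nhds_of_tendsto_nhdsWithin tendsto_arctan_atTop).const_sub b).add
      (isLittleO_log_sq_add_one_atTop.tendsto_div_nhds_zero.const_mul _)
  refine (tendsto_id.atTop_mul_neg (by linarith) hlim).congr' ?_
  filter_upwards [eventually_gt_atTop 0] with t ht
  rw [id]
  field_simp
  ring

theorem h_c_tendsto_bot_general
    (lam a c : ℝ)
    (hc : c < Real.pi / 2 - 1)
    (f : ℝ → ℝ)
    (hf : ∀ t, f t = -t * Real.arctan t + (1 / 2) * Real.log (t ^ 2 + 1)) :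
    ∀ K : ℝ, ∃ R₀ : ℝ, R₀ > 1 ∧ ∀ r : ℝ, r ≥ R₀ → ∀ t : ℝ,
      Real.log r - a ≤ t → t ≤ lam * Real.log r + a →
      Real.log r + c * t + f t ≤ -K := by
  intro K
  have hg : Tendsto (fun t => (1 + c) * t + f t) atTop atBot := by
    simpa only [hf] using tendsto_mul_add_neg_mul_arctan_add_log_atBot (by linarith)
  obtain ⟨T, hT⟩ := eventually_atTop.1 (tendsto_atBot.1 hg (-K - a))
  refine ⟨max (exp (T + a)) 2, lt_max_of_lt_right one_lt_two, fun r hr t hlo _ => ?_⟩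
  have hexp : exp (T + a) ≤ r := le_of_max_le_left hr
  have hlog : T + a ≤ log r := (le_log_iff_exp_le ((exp_pos _).trans_le hexp)).2 hexp
  linarith [hT t (by linarith)]

/-- In a region between catenoid ends of logarithmic growths `1` and `λ ≥ 1`
(so `log r − a ≤ t ≤ λ log r + a`), for `c < π/2 − 1` the function
`h_c = log r + c t + f(t)`, with `f(t) = −t arctan t + ½ log(t² + 1)`,
tends to `−∞` as `r → ∞` (Lemma 3.5 of the paper). -/
theorem h_c_tendsto_bot
    (lam a c : ℝ) (hlam : 1 ≤ lam) (ha : 0 ≤ a)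
    (hc : c < Real.pi / 2 - 1)
    (f : ℝ → ℝ)
    (hf : ∀ t, f t = -t * Real.arctan t + (1 / 2) * Real.log (t ^ 2 + 1)) :
    ∀ K : ℝ, ∃ R₀ : ℝ, R₀ > 1 ∧ ∀ r : ℝ, r ≥ R₀ → ∀ t : ℝ,
      Real.log r - a ≤ t → t ≤ lam * Real.log r + a →
      Real.log r + c * t + f t ≤ -K :=
  h_c_tendsto_bot_general lam a c hc f hf
end

section
/- Let r ≥ 1 and let t ∈ ℝ satisfy |t| ≤ ½·log r. Then log r − t·arctan(t) + ½·log(t² + 1) ≥ (1/10)·log r. (That is, on a region where |x₃| ≤ ½·log r, the function h = log r + f(x₃) is bounded below by (1/10)·log r, hence is a nonnegative proper function whenever log r is proper.) -/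
/-! Since `|arctan| < π/2`, the term `-t arctan t` costs at most `|t| π/2 ≤ (π/4) log r`, and
`log (t² + 1) ≥ 0`; what remains of `log r` is at least `(1 - π/4) log r ≥ (1/10) log r`. -/

open Real

lemma Real.abs_arctan_lt_pi_div_two (t : ℝ) : |arctan t| < π / 2 :=
  abs_lt.2 ⟨neg_pi_div_two_lt_arctan t, arctan_lt_pi_div_two t⟩

lemma Real.mul_arctan_le_of_abs_le {t a : ℝ} (ht : |t| ≤ a) : t * arctan t ≤ a * (π / 2) :=
  calc t * arctan t ≤ |t| * |arctan t| := (le_abs_self _).trans (abs_mul _ _).le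
    _ ≤ a * (π / 2) := mul_le_mul ht (abs_arctan_lt_pi_div_two t).le (abs_nonneg _)
        ((abs_nonneg t).trans ht)

/-- On a region with `|x₃| ≤ ½ log r`, the function `h = log r + f(x₃)`, with
`f(t) = −t arctan t + ½ log(t² + 1)`, is bounded below by `(1/10) log r`
(from the proof of Lemma 2.1 of the paper). -/
theorem h_ge_tenth_log_r
    (r t : ℝ) (hr : 1 ≤ r) (ht : |t| ≤ (1 / 2) * Real.log r) :
    Real.log r - t * Real.arctan t + (1 / 2) * Real.log (t ^ 2 + 1) ≥
      (1 / 10) * Real.log r := by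
  have hlog_r : 0 ≤ log r := log_nonneg hr
  have harctan : t * arctan t ≤ (1 / 2) * log r * (π / 2) := mul_arctan_le_of_abs_le ht
  have hpi : (1 / 2) * log r * (π / 2) ≤ (9 / 10) * log r := by nlinarith [pi_lt_d2]
  have hlog_sq : 0 ≤ log (t ^ 2 + 1) := log_nonneg (le_add_of_nonneg_left (sq_nonneg t))
  linarith
end
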